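/- arXiv:2201.04972 — 10 statements merged into one kernel-verified Lean document; each statement's English description precedes it below -/
import Mathlib

section
/- Let R be a commutative ring, α a type, s a finite subset of α, y : α → R, and n ∈ ℕ. Then Σ_{t ⊆ s} (−1)^{|s|−|t|} · (Σ_{c ∈ t} y_c)^n = Σ_m multinomial(n; (m_c)_{c∈s}) · Π_{c ∈ s} y_c^{m_c}, where the right-hand sum ranges over all functions m : α → ℕ that vanish outside s, satisfy m_c ≥ 1 for every c ∈ s, and satisfy Σ_{c ∈ s} m_c = n, and multinomial(n; (m_c)_{c∈s}) = n! / Π_{c∈s} m_c! is the (integer) multinomial coefficient. -/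
lemma aux_multinomial_subset {α : Type*} {t s : Finset α} (hts : t ⊆ s)
    {k : α → ℕ} (hk : ∀ i ∈ s, i ∉ t → k i = 0) :
    Nat.multinomial s k = Nat.multinomial t k := by
  unfold Nat.multinomial
  rw [← Finset.sum_subset hts (fun i hi hit => hk i hi hit),
      ← Finset.prod_subset hts (fun i hi hit => by rw [hk i hi hit]; rfl)]

lemma aux_sign_sum {α : Type*} [DecidableEq α] (s A : Finset α) (hA : A ⊆ s) :
    (∑ t ∈ s.powerset, if A ⊆ t then ((-1 : ℤ)) ^ (s.card - t.card) else 0)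
      = if A = s then 1 else 0 := by
  rw [← Finset.sum_filter]
  have key : ∑ t ∈ s.powerset.filter (fun t => A ⊆ t), ((-1 : ℤ)) ^ (s.card - t.card)
      = ∑ v ∈ (s \ A).powerset, ((-1 : ℤ)) ^ ((s \ A).card - v.card) := by
    refine Finset.sum_nbij' (fun t => t \ A) (fun v => A ∪ v) ?_ ?_ ?_ ?_ ?_
    · intro t ht
      simp only [Finset.mem_filter, Finset.mem_powerset] at ht ⊢
      exact Finset.sdiff_subset_sdiff ht.1 subset_rfl
    · intro v hv
      simp only [Finset.mem_powerset] at hv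
      simp only [Finset.mem_filter, Finset.mem_powerset]
      exact ⟨Finset.union_subset hA (hv.trans Finset.sdiff_subset), Finset.subset_union_left⟩
    · intro t ht
      simp only [Finset.mem_filter, Finset.mem_powerset] at ht
      exact Finset.union_sdiff_of_subset ht.2
    · intro v hv
      simp only [Finset.mem_powerset] at hv
      show (A ∪ v) \ A = v
      rw [Finset.union_sdiff_cancel_left]
      rw [Finset.disjoint_left]
      intro a ha hav
      exact (Finset.mem_sdiff.1 (hv hav)).2 ha
    · intro t ht
      simp only [Finset.mem_filter, Finset.mem_powerset] at ht
      show ((-1 : ℤ)) ^ (s.card - t.card) = ((-1 : ℤ)) ^ ((s \ A).card - (t \ A).card)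
      congr 1
      have h1 : (t \ A).card = t.card - A.card := Finset.card_sdiff_of_subset ht.2
      have h2 : (s \ A).card = s.card - A.card := Finset.card_sdiff_of_subset hA
      have h3 := Finset.card_le_card ht.1
      have h4 := Finset.card_le_card ht.2
      have h5 := Finset.card_le_card hA
      omega
  rw [key]
  have hpull : ∀ v ∈ (s \ A).powerset,
      ((-1 : ℤ)) ^ ((s \ A).card - v.card) = (-1) ^ (s \ A).card * (-1) ^ v.card := by
    intro v hv
    have hle : v.card ≤ (s \ A).card := Finset.card_le_card (Finset.mem_powerset.1 hv)
    have : ((-1 : ℤ)) ^ ((s \ A).card - v.card) * ((-1) ^ v.card * (-1) ^ v.card) =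
        (-1) ^ (s \ A).card * (-1) ^ v.card := by
      rw [← mul_assoc, ← pow_add]
      congr 2
      omega
    simpa [← pow_add, ← two_mul, pow_mul] using this
  rw [Finset.sum_congr rfl hpull, ← Finset.mul_sum, Finset.sum_powerset_neg_one_pow_card]
  have hiff : s \ A = ∅ ↔ A = s := by
    constructor
    · intro h
      exact Finset.Subset.antisymm hA (fun x hx => by
        by_contra hxA
        exact absurd (Finset.mem_sdiff.2 ⟨hx, hxA⟩) (by simp [h]))
    · intro h; simp [h]
  by_cases h : A = s <;> simp [h, hiff, Finset.sdiff_eq_empty_iff_subset]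

/-- coupling components of the power oracle component
`(∑ c ∈ s, y c)^n`: the alternating sum over subsets equals the sum of
multinomial terms over multiplicity vectors `m` supported on `s`, positive
on `s`, and with total sum `n`. -/
theorem stmt_4 {R α : Type*} [CommRing R] [DecidableEq α]
    (s : Finset α) (y : α → R) (n : ℕ) :
    ∑ t ∈ s.powerset, (-1 : ℤ) ^ (s.card - t.card) • (∑ c ∈ t, y c) ^ n =
      ∑ m ∈ (Finset.piAntidiag s n).filter (fun m => ∀ c ∈ s, 1 ≤ m c),
        (Nat.multinomial s m : R) * ∏ c ∈ s, y c ^ m c := by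
  classical
  have hpow : ∀ t ∈ s.powerset,
      (-1 : ℤ) ^ (s.card - t.card) • (∑ c ∈ t, y c) ^ n
      = ∑ k ∈ Finset.piAntidiag s n,
          (if ∀ i, k i ≠ 0 → i ∈ t then
            (-1 : ℤ) ^ (s.card - t.card) • ((Nat.multinomial s k : R) * ∏ c ∈ s, y c ^ k c)
          else 0) := by
    intro t ht
    rw [Finset.mem_powerset] at ht
    have hset : (Finset.piAntidiag s n).filter (fun k => ∀ i, k i ≠ 0 → i ∈ t)
        = Finset.piAntidiag t n := by
      ext k
      simp only [Finset.mem_filter, Finset.mem_piAntidiag]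
      constructor
      · rintro ⟨⟨hsum, -⟩, hsupp⟩
        refine ⟨?_, hsupp⟩
        rw [← hsum]
        exact (Finset.sum_subset ht (fun i _ hit => by
          by_contra h; exact hit (hsupp i h)))
      · rintro ⟨hsum, hsupp⟩
        refine ⟨⟨?_, fun i hi => ht (hsupp i hi)⟩, hsupp⟩
        rw [← hsum]
        exact (Finset.sum_subset ht (fun i _ hit => by
          by_contra h; exact hit (hsupp i h))).symm
    rw [← Finset.sum_filter, hset, Finset.sum_pow_eq_sum_piAntidiag, Finset.smul_sum]
    refine Finset.sum_congr rfl fun k hk => ?_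
    rw [Finset.mem_piAntidiag] at hk
    have h0 : ∀ i ∈ s, i ∉ t → k i = 0 := fun i _ hit => by
      by_contra h; exact hit (hk.2 i h)
    rw [aux_multinomial_subset ht h0,
        Finset.prod_subset ht (fun i hi hit => by rw [h0 i hi hit, pow_zero])]
  rw [Finset.sum_congr rfl hpow, Finset.sum_comm, Finset.sum_filter]
  refine Finset.sum_congr rfl fun k hk => ?_
  rw [Finset.mem_piAntidiag] at hk
  have hsupp : ∀ t : Finset α, (∀ i, k i ≠ 0 → i ∈ t) ↔ s.filter (fun i => k i ≠ 0) ⊆ t := by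
    intro t
    constructor
    · intro h i hi
      exact h i (Finset.mem_filter.1 hi).2
    · intro h i hi
      exact h (Finset.mem_filter.2 ⟨hk.2 i hi, hi⟩)
  calc ∑ t ∈ s.powerset,
        (if ∀ i, k i ≠ 0 → i ∈ t then
          (-1 : ℤ) ^ (s.card - t.card) • ((Nat.multinomial s k : R) * ∏ c ∈ s, y c ^ k c)
        else 0)
      = (∑ t ∈ s.powerset, if s.filter (fun i => k i ≠ 0) ⊆ t then ((-1 : ℤ)) ^ (s.card - t.card) else 0)
          • ((Nat.multinomial s k : R) * ∏ c ∈ s, y c ^ k c) := by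
        rw [Finset.sum_smul]
        refine Finset.sum_congr rfl fun t _ => ?_
        rw [ite_smul, zero_smul]
        simp [hsupp t]
    _ = _ := by
        rw [aux_sign_sum _ _ (Finset.filter_subset _ _)]
        have : s.filter (fun i => k i ≠ 0) = s ↔ ∀ c ∈ s, 1 ≤ k c := by
          rw [Finset.filter_eq_self]
          constructor
          · intro h c hc; have := h c hc; omega
          · intro h c hc; have := h c hc; omega
        by_cases hcase : ∀ c ∈ s, 1 ≤ k c <;> simp [hcase, this]
end

section
/- Let R be a commutative ring, α a type, T a finite type, τ : α → T, s a finite subset of α, y : α → R, and n : T → ℕ with n_j ≥ 1 for every j ∈ T. Then Σ_{t ⊆ s} (−1)^{|s|−|t|} · Π_{j ∈ T} (Σ_{c ∈ t, τ(c) = j} y_c)^{n_j} = Σ_m [ Π_{j ∈ T} multinomial(n_j; (m_c)_{c ∈ s, τ(c)=j}) ] · Π_{c ∈ s} y_c^{m_c}, where the right-hand sum ranges over all functions m : α → ℕ that vanish outside s, satisfy m_c ≥ 1 for every c ∈ s, and satisfy Σ_{c ∈ s, τ(c)=j} m_c = n_j for every j ∈ T, and multinomial(n_j; (m_c)) = n_j!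 / Π m_c! is the (integer) multinomial coefficient. -/
open Finset

private lemma multinomial_subset' {α : Type*} [DecidableEq α] {t u : Finset α} (h : t ⊆ u)
    (m : α → ℕ) (h0 : ∀ i ∈ u, i ∉ t → m i = 0) :
    Nat.multinomial u m = Nat.multinomial t m := by
  unfold Nat.multinomial
  rw [← Finset.sum_subset h (fun i hi hit => h0 i hi hit),
      ← Finset.prod_subset h (fun i hi hit => by rw [h0 i hi hit, Nat.factorial_zero])]

private lemma sign_sum' {α : Type*} [DecidableEq α] (s u : Finset α) (hu : u ⊆ s) :
    ∑ t ∈ s.powerset.filter (fun t => u ⊆ t), ((-1:ℤ) ^ (s.card - t.card)) =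
      if u = s then 1 else 0 := by
  have key : ∀ v : Finset α, ∑ t ∈ v.powerset, ((-1:ℤ) ^ (v.card - t.card)) =
      if v = ∅ then 1 else 0 := by
    intro v
    have h1 : ∀ t ∈ v.powerset, ((-1:ℤ) ^ (v.card - t.card)) = (-1)^v.card * (-1)^t.card := by
      intro t ht
      rw [mem_powerset] at ht
      have hc := Finset.card_le_card ht
      have h2 : ((-1:ℤ))^v.card = (-1)^(v.card - t.card) * (-1)^t.card := by
        rw [← pow_add]; congr 1; omega
      have h3 : ((-1:ℤ))^t.card * (-1)^t.card = 1 := by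
        rw [← pow_add, ← two_mul, pow_mul]; norm_num
      rw [h2, mul_assoc, h3, mul_one]
    rw [Finset.sum_congr rfl h1, ← Finset.mul_sum, Finset.sum_powerset_neg_one_pow_card]
    split_ifs with h
    · subst h; simp
    · simp
  rw [show (if u = s then (1:ℤ) else 0) = if (s \ u) = ∅ then 1 else 0 by
        have : u = s ↔ s \ u = ∅ := by
          rw [Finset.sdiff_eq_empty_iff_subset]
          constructor
          · rintro rfl; exact Finset.Subset.refl _
          · intro h; exact Finset.Subset.antisymm hu h
        simp [this]]
  rw [← key (s \ u)]
  refine Finset.sum_nbij' (fun t => t \ u) (fun t => t ∪ u) ?_ ?_ ?_ ?_ ?_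
  · intro t ht
    simp only [mem_filter, mem_powerset] at ht
    exact mem_powerset.2 (Finset.sdiff_subset_sdiff ht.1 (le_refl _))
  · intro t ht
    simp only [mem_powerset] at ht ⊢
    simp only [mem_filter, mem_powerset]
    exact ⟨Finset.union_subset (ht.trans (Finset.sdiff_subset)) hu, Finset.subset_union_right⟩
  · intro t ht
    simp only [mem_filter, mem_powerset] at ht
    show t \ u ∪ u = t
    rw [Finset.sdiff_union_of_subset ht.2]
  · intro t ht
    simp only [mem_powerset] at ht
    show (t ∪ u) \ u = t
    rw [Finset.union_sdiff_right]
    exact Finset.sdiff_eq_self_of_disjoint (Finset.disjoint_left.2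
      fun a hat hau => (Finset.mem_sdiff.1 (ht hat)).2 hau)
  · intro t ht
    simp only [mem_filter, mem_powerset] at ht
    congr 1
    rw [Finset.card_sdiff_of_subset hu, Finset.card_sdiff_of_subset ht.2]
    have := Finset.card_le_card ht.1
    have := Finset.card_le_card ht.2
    have := Finset.card_le_card hu
    omega

private lemma expand_lemma {R α T : Type*} [CommRing R] [DecidableEq α] [Fintype T]
    [DecidableEq T] (τ : α → T) (y : α → R) (n : T → ℕ) (t : Finset α) :
    ∏ j : T, (∑ c ∈ t.filter (fun c => τ c = j), y c) ^ n j =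
      ∑ m ∈ (Finset.piAntidiag t (∑ j : T, n j)).filter
          (fun m => ∀ j : T, ∑ c ∈ t.filter (fun c => τ c = j), m c = n j),
        ((∏ j : T, Nat.multinomial (t.filter (fun c => τ c = j)) m : ℕ) : R) *
          ∏ c ∈ t, y c ^ m c := by
  simp only [Finset.sum_pow_eq_sum_piAntidiag]
  rw [Finset.prod_univ_sum]
  refine Finset.sum_nbij' (fun g c => g (τ c) c) (fun m j c => if τ c = j then m c else 0)
    ?_ ?_ ?_ ?_ ?_
  · intro g hg
    rw [Fintype.mem_piFinset] at hg
    simp only [mem_filter, mem_piAntidiag]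
    have hsupp : ∀ j : T, ∀ c, g j c ≠ 0 → c ∈ t.filter (fun c => τ c = j) :=
      fun j c hc => ((mem_piAntidiag.1 (hg j)).2 c hc)
    have hsum : ∀ j : T, ∑ c ∈ t.filter (fun c => τ c = j), g j c = n j :=
      fun j => (mem_piAntidiag.1 (hg j)).1
    have htyped : ∀ j : T, ∑ c ∈ t.filter (fun c => τ c = j), g (τ c) c = n j := by
      intro j
      rw [← hsum j]
      refine Finset.sum_congr rfl fun c hc => ?_
      rw [(mem_filter.1 hc).2]
    refine ⟨⟨?_, ?_⟩, htyped⟩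
    · rw [← Finset.sum_fiberwise t τ (fun c => g (τ c) c)]
      exact Finset.sum_congr rfl fun j _ => htyped j
    · intro c hc
      exact mem_of_mem_filter c (hsupp (τ c) c hc)
  · intro m hm
    simp only [mem_filter, mem_piAntidiag] at hm
    rw [Fintype.mem_piFinset]
    intro j
    rw [mem_piAntidiag]
    constructor
    · rw [← hm.2 j]
      refine Finset.sum_congr rfl fun c hc => ?_
      show (if τ c = j then m c else 0) = m c
      rw [if_pos (mem_filter.1 hc).2]
    · intro c hc
      replace hc : (if τ c = j then m c else 0) ≠ 0 := hc
      by_cases h : τ c = j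
      · rw [if_pos h] at hc
        exact mem_filter.2 ⟨hm.1.2 c hc, h⟩
      · rw [if_neg h] at hc; exact absurd rfl hc
  · intro g hg
    rw [Fintype.mem_piFinset] at hg
    funext j c
    by_cases h : τ c = j
    · simp only [if_pos h]; rw [h]
    · simp only [if_neg h]
      by_contra hne
      have := (mem_piAntidiag.1 (hg j)).2 c (fun h0 => hne h0.symm)
      exact h (mem_filter.1 this).2
  · intro m hm
    funext c
    simp
  · intro g hg
    rw [Fintype.mem_piFinset] at hg
    rw [Finset.prod_mul_distrib]
    congr 1
    · rw [← Nat.cast_prod]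
      congr 1
      refine Finset.prod_congr rfl fun j _ => ?_
      refine Nat.multinomial_congr fun c hc => ?_
      show g j c = g (τ c) c
      rw [(mem_filter.1 hc).2]
    · rw [← Finset.prod_fiberwise t τ (fun c => y c ^ g (τ c) c)]
      refine Finset.prod_congr rfl fun j _ => ?_
      refine Finset.prod_congr rfl fun c hc => ?_
      rw [(mem_filter.1 hc).2]

/-- multi-type version of the power identity. With types `τ : α → T`
and exponents `n j ≥ 1`, the alternating sum over subsets of the product of the
typed power sums equals the sum over multiplicity vectors of products of
multinomial coefficients times monomials. -/
theorem stmt_5 {R α T : Type*} [CommRing R] [DecidableEq α] [Fintype T] [DecidableEq T]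
    (τ : α → T) (s : Finset α) (y : α → R) (n : T → ℕ) (hn : ∀ j, 1 ≤ n j) :
    ∑ t ∈ s.powerset, (-1 : ℤ) ^ (s.card - t.card) •
        ∏ j : T, (∑ c ∈ t.filter (fun c => τ c = j), y c) ^ n j =
      ∑ m ∈ (Finset.piAntidiag s (∑ j : T, n j)).filter
          (fun m => (∀ c ∈ s, 1 ≤ m c) ∧
            ∀ j : T, ∑ c ∈ s.filter (fun c => τ c = j), m c = n j),
        ((∏ j : T, Nat.multinomial (s.filter (fun c => τ c = j)) m : ℕ) : R) *
          ∏ c ∈ s, y c ^ m c := by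
  classical
  set N := ∑ j : T, n j with hN
  set M : Finset (α → ℕ) := (Finset.piAntidiag s N).filter
      (fun m => ∀ j : T, ∑ c ∈ s.filter (fun c => τ c = j), m c = n j) with hM
  set F : (α → ℕ) → R := fun m =>
      ((∏ j : T, Nat.multinomial (s.filter (fun c => τ c = j)) m : ℕ) : R) *
        ∏ c ∈ s, y c ^ m c with hF
  -- Step A
  have stepA : ∀ t ∈ s.powerset,
      (∏ j : T, (∑ c ∈ t.filter (fun c => τ c = j), y c) ^ n j) =
      ∑ m ∈ M.filter (fun m => ∀ c, m c ≠ 0 → c ∈ t), F m := by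
    intro t ht
    rw [mem_powerset] at ht
    rw [expand_lemma τ y n t]
    have hset : (Finset.piAntidiag t N).filter
          (fun m => ∀ j : T, ∑ c ∈ t.filter (fun c => τ c = j), m c = n j) =
        M.filter (fun m => ∀ c, m c ≠ 0 → c ∈ t) := by
      ext m
      simp only [hM, mem_filter, mem_piAntidiag, and_assoc]
      constructor
      · rintro ⟨h1, h2, h3⟩
        have hz : ∀ c ∈ s, c ∉ t → m c = 0 := fun c _ hct => by
          by_contra h; exact hct (h2 c h)
        refine ⟨?_, fun c hc => ht (h2 c hc), ?_, h2⟩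
        · rw [← h1]; exact (Finset.sum_subset ht hz).symm
        · intro j
          rw [← h3 j]
          refine (Finset.sum_subset (Finset.filter_subset_filter _ ht) ?_).symm
          intro c hc hct
          exact hz c (mem_of_mem_filter c hc)
            (fun h => hct (mem_filter.2 ⟨h, (mem_filter.1 hc).2⟩))
      · rintro ⟨h1, h2, h3, h4⟩
        have hz : ∀ c ∈ s, c ∉ t → m c = 0 := fun c _ hct => by
          by_contra h; exact hct (h4 c h)
        refine ⟨?_, h4, ?_⟩
        · rw [← h1]; exact Finset.sum_subset ht hz
        · intro j
          rw [← h3 j]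
          refine Finset.sum_subset (Finset.filter_subset_filter _ ht) ?_
          intro c hc hct
          exact hz c (mem_of_mem_filter c hc)
            (fun h => hct (mem_filter.2 ⟨h, (mem_filter.1 hc).2⟩))
    rw [hset]
    refine Finset.sum_congr rfl fun m hm => ?_
    simp only [mem_filter] at hm
    have hsupp : ∀ c, m c ≠ 0 → c ∈ t := hm.2
    have hz : ∀ c ∈ s, c ∉ t → m c = 0 := fun c _ hct => by
      by_contra h; exact hct (hsupp c h)
    rw [hF]
    congr 1
    · congr 1
      refine Finset.prod_congr rfl fun j _ => ?_
      refine (multinomial_subset' (Finset.filter_subset_filter _ ht) m ?_).symm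
      intro c hc hct
      exact hz c (mem_of_mem_filter c hc)
        (fun h => hct (mem_filter.2 ⟨h, (mem_filter.1 hc).2⟩))
    · refine Finset.prod_subset ht ?_
      intro c hc hct
      rw [hz c hc hct, pow_zero]
  -- Step B: swap sums
  calc ∑ t ∈ s.powerset, (-1 : ℤ) ^ (s.card - t.card) •
        ∏ j : T, (∑ c ∈ t.filter (fun c => τ c = j), y c) ^ n j
      = ∑ t ∈ s.powerset, ∑ m ∈ M,
          if (∀ c, m c ≠ 0 → c ∈ t) then (-1 : ℤ) ^ (s.card - t.card) • F m else 0 := by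
        refine Finset.sum_congr rfl fun t ht => ?_
        rw [stepA t ht, Finset.smul_sum, Finset.sum_filter]
    _ = ∑ m ∈ M, ∑ t ∈ s.powerset,
          if (∀ c, m c ≠ 0 → c ∈ t) then (-1 : ℤ) ^ (s.card - t.card) • F m else 0 :=
        Finset.sum_comm
    _ = ∑ m ∈ M, (if s.filter (fun c => m c ≠ 0) = s then F m else 0) := by
        refine Finset.sum_congr rfl fun m hm => ?_
        simp only [hM, mem_filter, mem_piAntidiag] at hm
        have hsupp : ∀ c, m c ≠ 0 → c ∈ s := hm.1.2
        have hcond : ∀ t ∈ s.powerset,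
            (∀ c, m c ≠ 0 → c ∈ t) ↔ s.filter (fun c => m c ≠ 0) ⊆ t := by
          intro t _
          constructor
          · intro h c hc
            exact h c (mem_filter.1 hc).2
          · intro h c hc
            exact h (mem_filter.2 ⟨hsupp c hc, hc⟩)
        rw [Finset.sum_congr rfl fun t ht => by rw [if_congr (hcond t ht) rfl rfl]]
        rw [← Finset.sum_filter, ← Finset.sum_smul,
          sign_sum' s (s.filter (fun c => m c ≠ 0)) (Finset.filter_subset _ _)]
        split_ifs <;> simp
    _ = ∑ m ∈ M.filter (fun m => s.filter (fun c => m c ≠ 0) = s), F m :=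
        (Finset.sum_filter _ _).symm
    _ = _ := by
        refine Finset.sum_congr ?_ fun m _ => rfl
        ext m
        simp only [hM, mem_filter, mem_piAntidiag, Finset.filter_eq_self, and_assoc]
        constructor
        · rintro ⟨h1, h2, h3, h4⟩
          exact ⟨h1, h2, fun c hc => Nat.one_le_iff_ne_zero.2 (h4 c hc), h3⟩
        · rintro ⟨h1, h2, h3, h4⟩
          exact ⟨h1, h2, h4, fun c hc => Nat.one_le_iff_ne_zero.1 (h3 c hc)⟩
end

section
/- Fix k ∈ ℕ and m, M : Fin k → ℕ. Then, working in ℚ, the sum over all families a, where a assigns to each index i < k a tuple (a_{i,1}, …, a_{i,m_i}) of positive integers with a_{i,1} + ⋯ + a_{i,m_i} = M_i, of the product Π_{i<k} Π_{j≤m_i} 1/a_{i,j}, equals Π_{i<k} (m_i! / M_i!) · c(M_i, m_i). -/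
/-!
Write `S(n, m)` for the sum of `∏ 1/a_j` over compositions `a` of `n` into `m` positive parts.
Multiplying a summand of `S(n+1, m+1)` by `n + 1 = ∑ a_j` splits it into the `m + 1` products
that omit one part; omitting a part is a bijection onto compositions into `m` parts of some
`N ≤ n`, so `(n+1) S(n+1, m+1) = (m+1) ∑_{N ≤ n} S(N, m)`. Differencing in `n` gives
`(n+1) S(n+1, m+1) = n S(n, m+1) + (m+1) S(n, m)`, which is exactly the Stirling recurrence
for `m!/n! · c(n, m)`. The sum over families factors as a product of the `S(M_i, m_i)`.
-/

def stirlingFirst : ℕ → ℕ → ℕ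
  | 0, 0 => 1
  | 0, _ + 1 => 0
  | _ + 1, 0 => 0
  | n + 1, k + 1 => n * stirlingFirst n (k + 1) + stirlingFirst n k

open Finset
open scoped Nat

def posCompositions (n m : ℕ) : Finset (Fin m → ℕ) :=
  (Fintype.piFinset fun _ : Fin m => Icc 1 n).filter fun t => ∑ j, t j = n

theorem mem_posCompositions {n m : ℕ} {t : Fin m → ℕ} :
    t ∈ posCompositions n m ↔ (∀ j, 0 < t j) ∧ ∑ j, t j = n := by
  simp only [posCompositions, mem_filter, Fintype.mem_piFinset, mem_Icc]
  refine ⟨fun ⟨h, hs⟩ => ⟨fun j => (h j).1, hs⟩, fun ⟨h, hs⟩ => ⟨fun j => ⟨h j, ?_⟩, hs⟩⟩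
  exact hs ▸ single_le_sum (fun _ _ => Nat.zero_le _) (mem_univ j)

theorem mem_biUnion_posCompositions {n m : ℕ} {t : Fin m → ℕ} :
    t ∈ (range (n + 1)).biUnion (posCompositions · m) ↔ (∀ j, 0 < t j) ∧ ∑ j, t j ≤ n := by
  simp [mem_posCompositions, and_comm]

theorem pairwiseDisjoint_posCompositions (s : Finset ℕ) (m : ℕ) :
    (s : Set ℕ).PairwiseDisjoint (posCompositions · m) :=
  fun _ _ _ _ hne => disjoint_left.2 fun _ ht ht' =>
    hne ((mem_posCompositions.1 ht).2.symm.trans (mem_posCompositions.1 ht').2)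

theorem sum_posCompositions_removeNth {β : Type*} [AddCommMonoid β] (n m : ℕ)
    (p : Fin (m + 1)) (f : (Fin m → ℕ) → β) :
    ∑ t ∈ posCompositions (n + 1) (m + 1), f (p.removeNth t) =
      ∑ N ∈ range (n + 1), ∑ s ∈ posCompositions N m, f s := by
  rw [← sum_biUnion (pairwiseDisjoint_posCompositions _ m)]
  refine sum_nbij' p.removeNth (fun s => p.insertNth (n + 1 - ∑ i, s i) s) ?_ ?_ ?_ ?_
    (fun _ _ => rfl)
  · intro t ht
    obtain ⟨hpos, hsum⟩ := mem_posCompositions.1 ht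
    have := Fin.sum_univ_succAbove t p
    have := hpos p
    exact mem_biUnion_posCompositions.2 ⟨fun _ => hpos _, by simp only [Fin.removeNth]; omega⟩
  · intro s hs
    obtain ⟨hpos, hsum⟩ := mem_biUnion_posCompositions.1 hs
    refine mem_posCompositions.2 ⟨fun l => ?_, ?_⟩
    · refine Fin.succAboveCases p ?_ (fun i => ?_) l
      · simp only [Fin.insertNth_apply_same]; omega
      · simpa only [Fin.insertNth_apply_succAbove] using hpos i
    · rw [Fin.sum_univ_succAbove _ p]
      simp only [Fin.insertNth_apply_same, Fin.insertNth_apply_succAbove]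
      omega
  · intro t ht
    have hsum := (mem_posCompositions.1 ht).2
    have := Fin.sum_univ_succAbove t p
    have hp : n + 1 - ∑ i, p.removeNth t i = t p := by simp only [Fin.removeNth]; omega
    simp only [hp, Fin.insertNth_self_removeNth]
  · intro s _
    exact Fin.removeNth_insertNth _ _ _

theorem sum_mul_prod_inv_eq_sum_prod_inv_removeNth {K : Type*} [Field K] {m : ℕ}
    (t : Fin (m + 1) → K) (ht : ∀ j, t j ≠ 0) :
    (∑ j, t j) * ∏ j, (t j)⁻¹ = ∑ p : Fin (m + 1), ∏ i, (p.removeNth t i)⁻¹ := by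
  rw [sum_mul]
  refine sum_congr rfl fun p _ => ?_
  rw [Fin.prod_univ_succAbove _ p, ← mul_assoc, mul_inv_cancel₀ (ht p), one_mul]
  rfl

noncomputable def compositionSum (n m : ℕ) : ℚ :=
  ∑ t ∈ posCompositions n m, ∏ j, 1 / (t j : ℚ)

theorem compositionSum_zero_right (n : ℕ) : compositionSum n 0 = if n = 0 then 1 else 0 := by
  simp only [compositionSum, posCompositions]
  split_ifs with hn <;> simp [hn, eq_comm]

theorem compositionSum_zero_succ (m : ℕ) : compositionSum 0 (m + 1) = 0 := by
  simp [compositionSum, posCompositions]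

theorem succ_mul_compositionSum_succ_eq_sum (n m : ℕ) :
    (n + 1 : ℚ) * compositionSum (n + 1) (m + 1) =
      (m + 1) * ∑ N ∈ range (n + 1), compositionSum N m := by
  calc (n + 1 : ℚ) * compositionSum (n + 1) (m + 1)
      = ∑ t ∈ posCompositions (n + 1) (m + 1),
          ∑ p : Fin (m + 1), ∏ i, 1 / (p.removeNth t i : ℚ) := by
        rw [compositionSum, mul_sum]
        refine sum_congr rfl fun t ht => ?_
        obtain ⟨hpos, hsum⟩ := mem_posCompositions.1 ht
        have := sum_mul_prod_inv_eq_sum_prod_inv_removeNth (fun j => (t j : ℚ))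
          fun j => Nat.cast_ne_zero.2 (hpos j).ne'
        simp only [← Nat.cast_sum, hsum, Nat.cast_add, Nat.cast_one] at this
        simp only [one_div]
        exact this
    _ = ∑ _p : Fin (m + 1), ∑ N ∈ range (n + 1), compositionSum N m := by
        rw [sum_comm]
        exact sum_congr rfl fun p _ =>
          sum_posCompositions_removeNth n m p fun s => ∏ i, 1 / (s i : ℚ)
    _ = _ := by simp

theorem succ_mul_compositionSum_succ (n m : ℕ) :
    (n + 1 : ℚ) * compositionSum (n + 1) (m + 1) =
      n * compositionSum n (m + 1) + (m + 1) * compositionSum n m := by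
  rw [succ_mul_compositionSum_succ_eq_sum]
  cases n with
  | zero => simp
  | succ n =>
    rw [sum_range_succ, mul_add, ← succ_mul_compositionSum_succ_eq_sum]
    push_cast
    ring

theorem compositionSum_eq (n m : ℕ) :
    compositionSum n m = m ! / n ! * stirlingFirst n m := by
  induction n generalizing m with
  | zero =>
    cases m <;> simp [compositionSum_zero_right, compositionSum_zero_succ, stirlingFirst]
  | succ n ih =>
    cases m with
    | zero => simp [compositionSum_zero_right, stirlingFirst]
    | succ m =>
      have h := succ_mul_compositionSum_succ n m
      rw [ih, ih] at h
      apply mul_left_cancel₀ (n.cast_add_one_ne_zero : (n + 1 : ℚ) ≠ 0)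
      rw [h, stirlingFirst, Nat.factorial_succ, Nat.factorial_succ]
      push_cast
      field_simp

/-- Lemma B.1 ('stirling_sums_multi_1'). The sum, over all families
`a` assigning to each `i < k` a tuple of `m i` positive integers summing to `M i`,
of `∏_i ∏_j 1/a_{i,j}` equals `∏_i (m_i)!/(M_i)! · c(M_i, m_i)` in `ℚ`. -/
theorem stmt_8 (k : ℕ) (m M : Fin k → ℕ) :
    ∑ a ∈ Fintype.piFinset (fun i : Fin k =>
        (Fintype.piFinset (fun _ : Fin (m i) => Finset.Icc 1 (M i))).filter
          (fun t => ∑ j, t j = M i)),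
      ∏ i : Fin k, ∏ j : Fin (m i), (1 : ℚ) / (a i j) =
      ∏ i : Fin k, ((m i).factorial : ℚ) / ((M i).factorial : ℚ) *
        (stirlingFirst (M i) (m i) : ℚ) :=
  (prod_univ_sum (fun i => posCompositions (M i) (m i))
      (fun _ t => ∏ j, (1 : ℚ) / (t j))).symm.trans
    (prod_congr rfl fun i _ => compositionSum_eq (M i) (m i))
end

section
/- For every m₁, m₂ ∈ ℕ, working in ℚ: Σ_n (−1)^n / n · n! / ((n − m₁)! · (n − m₂)! · (m₁ + m₂ − n)!) — where the sum ranges over all integers n with n ≥ 1, n ≥ m₁, n ≥ m₂, and n ≤ m₁ + m₂ — equals (−1)^{m₁}/m₁ if m₁ ≥ 1 and m₂ = 0; equals (−1)^{m₂}/m₂ if m₁ = 0 and m₂ ≥ 1; and equals 0 otherwise (in particular it is 0 when m₁ = m₂ = 0, the sum being empty, and 0 when both m₁ ≥ 1 and m₂ ≥ 1). -/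
/-!
Write the trinomial coefficient as `n.choose m₁ * m₁.choose (n - m₂)` and use
`n.choose m₁ / n = (n - 1).choose (m₁ - 1) / m₁`. For `m₁, m₂ ≥ 1` and `n = m₂ + k` the sum becomes
a multiple of `∑ₖ (-1)^k (m₁.choose k) ((m₂ - 1 + k).choose (m₁ - 1))`, an `m₁`-th forward difference
of a polynomial of degree `m₁ - 1`, hence zero. If `m₂ = 0` only the term `n = m₁` survives, and the
sum is symmetric in `m₁, m₂`.
-/

open Finset Nat fwdDiff

theorem fwdDiff_iter_choose_eq_zero_of_lt {r m : ℕ} (h : r < m) :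
    Δ_[1] ^[m] (fun x ↦ x.choose r : ℕ → ℤ) = 0 := by
  obtain ⟨k, rfl⟩ := Nat.exists_eq_add_of_lt h
  have hr : Δ_[1] ^[r] (fun x ↦ x.choose r : ℕ → ℤ) = fun _ ↦ 1 := by
    simpa using fwdDiff_iter_choose 0 r
  rw [add_assoc, add_comm, Function.iterate_add_apply, hr, Function.iterate_succ_apply,
    fwdDiff_const]
  exact Function.iterate_fixed (fwdDiff_const 1 0) k

theorem sum_range_neg_one_pow_mul_choose_mul_choose_eq_zero {R : Type*} [CommRing R]
    {r m : ℕ} (h : r < m) (s : ℕ) :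
    ∑ k ∈ range (m + 1), (-1 : R) ^ k * m.choose k * (s + k).choose r = 0 := by
  have hℤ := congr_fun (fwdDiff_iter_choose_eq_zero_of_lt h) s
  rw [fwdDiff_iter_eq_sum_shift] at hℤ
  have hsign : ∀ k ∈ range (m + 1), (-1 : R) ^ k = (-1) ^ m * (-1) ^ (m - k) := fun k hk ↦ by
    obtain ⟨j, rfl⟩ := Nat.exists_eq_add_of_le (Nat.lt_succ_iff.mp (mem_range.mp hk))
    rw [Nat.add_sub_cancel_left, pow_add, mul_assoc, ← pow_add, ← two_mul, pow_mul]
    simp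
  calc ∑ k ∈ range (m + 1), (-1 : R) ^ k * m.choose k * (s + k).choose r
      = (-1) ^ m * ∑ k ∈ range (m + 1), (-1 : R) ^ (m - k) * m.choose k * (s + k).choose r := by
        rw [mul_sum]
        exact sum_congr rfl fun k hk ↦ by rw [hsign k hk]; ring
    _ = 0 := by
        refine mul_eq_zero_of_right _ ?_
        simpa [mul_assoc] using congr_arg (Int.cast : ℤ → R) hℤ

theorem cast_factorial_div_eq_choose_mul_choose {K : Type*} [Field K] [CharZero K]
    {n m₁ m₂ : ℕ} (h₁ : m₁ ≤ n) (h₂ : m₂ ≤ n) (h : n ≤ m₁ + m₂) :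
    (n ! : K) / ((n - m₁)! * (n - m₂)! * (m₁ + m₂ - n)!) = n.choose m₁ * m₁.choose (n - m₂) := by
  have h₃ : n - m₂ ≤ m₁ := by omega
  rw [cast_choose K h₁, cast_choose K h₃, show m₁ - (n - m₂) = m₁ + m₂ - n by omega]
  have : (m₁ ! : K) ≠ 0 := by exact_mod_cast m₁.factorial_ne_zero
  field_simp

theorem cast_choose_succ_div_succ {K : Type*} [Field K] [CharZero K] (c a : ℕ) :
    ((c + 1).choose (a + 1) : K) / (c + 1) = c.choose a / (a + 1) := by
  have := congr_arg (Nat.cast : ℕ → K) (add_one_mul_choose_eq c a)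
  push_cast at this
  field_simp
  linear_combination -this

def couplingSum (m₁ m₂ : ℕ) : ℚ :=
  ∑ n ∈ (Icc 1 (m₁ + m₂)).filter (fun n => m₁ ≤ n ∧ m₂ ≤ n),
    (-1) ^ n / n * n ! / ((n - m₁)! * (n - m₂)! * (m₁ + m₂ - n)!)

theorem couplingSum_comm (m₁ m₂ : ℕ) : couplingSum m₁ m₂ = couplingSum m₂ m₁ := by
  unfold couplingSum
  rw [add_comm m₁ m₂]
  exact sum_congr (by simp only [and_comm]) fun n _ ↦ by ring

-- For `m = 0` both sides vanish: the sum is empty and `1 / 0 = 0` in `ℚ`.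
theorem couplingSum_zero_right (m : ℕ) : couplingSum m 0 = (-1) ^ m / m := by
  rcases m.eq_zero_or_pos with rfl | hm
  · simp [couplingSum]
  have hsupp : (Icc 1 m).filter (fun n => m ≤ n) = {m} := by
    ext n
    simp only [mem_filter, mem_Icc, mem_singleton]
    omega
  simp [couplingSum, hsupp, mul_div_assoc, m.factorial_ne_zero]

theorem couplingSum_succ_succ (a b : ℕ) : couplingSum (a + 1) (b + 1) = 0 := by
  set S := (Icc 1 (a + 1 + (b + 1))).filter (fun n => a + 1 ≤ n ∧ b + 1 ≤ n)
  set g : ℕ → ℚ := fun n ↦ (-1) ^ n / (a + 1) * (n - 1).choose a * (a + 1).choose (n - (b + 1))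
  have hterm : ∀ n ∈ S, (-1 : ℚ) ^ n / n * n ! /
      ((n - (a + 1))! * (n - (b + 1))! * (a + 1 + (b + 1) - n)!) = g n := fun n hn ↦ by
    simp only [S, mem_filter, mem_Icc] at hn
    obtain ⟨c, rfl⟩ := Nat.exists_eq_add_of_le' hn.1.1
    rw [mul_div_assoc, cast_factorial_div_eq_choose_mul_choose hn.2.1 hn.2.2 hn.1.2]
    simp only [g, Nat.add_sub_cancel]
    push_cast
    linear_combination (-1 : ℚ) ^ (c + 1) * (a + 1).choose (c - b) *
      cast_choose_succ_div_succ (K := ℚ) c a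
  have hvanish : ∀ n ∈ Icc (b + 1) (a + 1 + (b + 1)), n ∉ S → g n = 0 := fun n hn hnS ↦ by
    simp only [S, mem_filter, mem_Icc] at hn hnS
    simp [g, Nat.choose_eq_zero_of_lt (show n - 1 < a by omega)]
  calc couplingSum (a + 1) (b + 1) = ∑ n ∈ S, g n := sum_congr rfl hterm
    _ = ∑ n ∈ Icc (b + 1) (a + 1 + (b + 1)), g n :=
        sum_subset (fun n hn ↦ by simp only [S, mem_filter, mem_Icc] at hn ⊢; omega) hvanish
    _ = ∑ k ∈ range (a + 2), g (b + 1 + k) := by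
        rw [← Ico_add_one_right_eq_Icc, sum_Ico_eq_sum_range]
        congr 2
        omega
    _ = (-1) ^ (b + 1) / (a + 1) *
          ∑ k ∈ range (a + 2), (-1 : ℚ) ^ k * (a + 1).choose k * (b + k).choose a := by
        rw [mul_sum]
        refine sum_congr rfl fun k _ ↦ ?_
        simp only [g, show b + 1 + k - 1 = b + k by omega, Nat.add_sub_cancel_left, pow_add]
        ring
    _ = 0 := by rw [sum_range_neg_one_pow_mul_choose_mul_choose_eq_zero a.lt_succ_self, mul_zero]

/-- Lemma B.7 ('comb_sum_coupling_to_basis_major'). For `m₁ m₂ : ℕ`,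
`∑_n (-1)^n/n · n!/((n-m₁)!(n-m₂)!(m₁+m₂-n)!)`, over integers `n` with
`n ≥ 1`, `n ≥ m₁`, `n ≥ m₂`, `n ≤ m₁+m₂`, equals `(-1)^{m₁}/m₁` if `m₁ ≥ 1 ∧ m₂ = 0`,
`(-1)^{m₂}/m₂` if `m₁ = 0 ∧ m₂ ≥ 1`, and `0` otherwise. -/
theorem stmt_12 (m₁ m₂ : ℕ) :
    ∑ n ∈ (Finset.Icc 1 (m₁ + m₂)).filter (fun n => m₁ ≤ n ∧ m₂ ≤ n),
      (-1 : ℚ) ^ n / (n : ℚ) * (n.factorial : ℚ) /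
        (((n - m₁).factorial : ℚ) * ((n - m₂).factorial : ℚ) *
          ((m₁ + m₂ - n).factorial : ℚ)) =
      if 1 ≤ m₁ ∧ m₂ = 0 then (-1 : ℚ) ^ m₁ / (m₁ : ℚ)
      else if m₁ = 0 ∧ 1 ≤ m₂ then (-1 : ℚ) ^ m₂ / (m₂ : ℚ)
      else 0 := by
  change couplingSum m₁ m₂ = _
  rcases m₁ with _ | a <;> rcases m₂ with _ | b
  · simp [couplingSum_zero_right]
  · simp [couplingSum_comm 0, couplingSum_zero_right]
  · simp [couplingSum_zero_right]
  · simp [couplingSum_succ_succ]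
end

section
/- Fix k, r, n ∈ ℕ and M : Fin k → ℕ with M_i ≥ 1 for every i, and suppose n ≥ Σ_i M_i. Then, working in ℚ, the sum over all pairs (m, p), where m : Fin k → ℕ satisfies m_i ≥ M_i for every i, p : Fin r → ℕ satisfies p_j ≥ 1 for every j, and Σ_i m_i + Σ_j p_j ≤ n, of the product Π_{i<k} C(m_i − 1, M_i − 1) · Π_{j<r} 1/p_j (with C the binomial coefficient), equals (r! / (n − Σ_i M_i)!) · c_{|M|+1}(n + 1, r + |M| + 1), where |M| = Σ_i M_i. -/
/-
Summing out `m` first: for fixed `a`, the sum of `∏ C(m_i - 1, M_i - 1)` over `m ≥ M` with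
`∑ m ≤ a` is `C(a, |M|)`, by iterating the upper Vandermonde identity. Summing out `p` with
`∑ p = b` gives the coefficient `B_r(b)` of `x^b` in `L^r`, `L = -log (1 - x)`. So the left side
is the convolution `T_r(n) = ∑_{a + b = n} C(a, |M|) B_r(b)`. The identity
`x (L^r)' = r L^(r-1) · x / (1 - x)` together with `(a - S) C(a, S) = a C(a - 1, S)` yields
`(n + 1 - S) T_r(n + 1) = (n + 1) T_r(n) + r T_{r-1}(n)`, which after scaling by `(n - S)! / r!`
is the defining recurrence of `c_{S+1}(n + 2, r + S + 1)`; induct on `n ≥ S`.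
-/

/-- Unsigned `r`-Stirling numbers of the first kind, defined by the recurrence
`c_r(n,k) = (n-1)·c_r(n-1,k) + c_r(n-1,k-1)` for `n > r`, `k > 0`, with boundary
conditions `c_r(r,k) = δ_{r,k}`, `c_r(n,k) = 0` for `n < r`, and `c_r(n,0) = 0`
for `n > r`. -/
def rStirlingFirst (r : ℕ) : ℕ → ℕ → ℕ
  | 0, k => if r = 0 then (if k = 0 then 1 else 0) else 0
  | n + 1, k =>
    if n + 1 < r then 0
    else if n + 1 = r then (if k = r then 1 else 0)
    else
      match k with
      | 0 => 0
      | k' + 1 => n * rStirlingFirst r n (k' + 1) + rStirlingFirst r n k'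

open Finset

lemma rStirlingFirst_self (R k : ℕ) :
    rStirlingFirst (R + 1) (R + 1) k = if k = R + 1 then 1 else 0 := by
  simp [rStirlingFirst]

lemma rStirlingFirst_succ_succ {R n : ℕ} (h : R ≤ n) (k : ℕ) :
    rStirlingFirst R (n + 1) (k + 1) = n * rStirlingFirst R n (k + 1) + rStirlingFirst R n k := by
  simp only [rStirlingFirst]
  rw [if_neg (by omega), if_neg (by omega)]

lemma rStirlingFirst_of_lt {R k : ℕ} (hk : k < R) (n : ℕ) : rStirlingFirst R n k = 0 := by
  induction n generalizing k with
  | zero => simp [rStirlingFirst]; omega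
  | succ n ih =>
    simp only [rStirlingFirst]
    split_ifs
    · rfl
    · omega
    · rfl
    · cases k with
      | zero => rfl
      | succ k => simp only [ih hk, ih (by omega : k < R), mul_zero, add_zero]

lemma sum_piFinset_succ {α R : Type*} [AddCommMonoid R] {k : ℕ} (s : Fin (k + 1) → Finset α)
    (f : (Fin (k + 1) → α) → R) :
    ∑ m ∈ Fintype.piFinset s, f m =
      ∑ x ∈ s 0, ∑ q ∈ Fintype.piFinset (fun i : Fin k => s i.succ), f (Fin.cons x q) := by
  have h := filter_piFinset_eq_map_consEquiv s (fun _ => True)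
  rw [filter_true, filter_true] at h
  rw [h, sum_map, sum_product]
  rfl

lemma sum_filter_piFinset_succ_prod {R : Type*} [CommSemiring R] {k : ℕ}
    (s : Fin (k + 1) → Finset ℕ) (P : ℕ → Prop) [DecidablePred P] (f : Fin (k + 1) → ℕ → R) :
    ∑ m ∈ Fintype.piFinset s with P (∑ i, m i), ∏ i, f i (m i) =
      ∑ x ∈ s 0, f 0 x * ∑ q ∈ Fintype.piFinset (fun i : Fin k => s i.succ) with
        P (x + ∑ i, q i), ∏ i, f i.succ (q i) := by
  simp only [sum_filter, sum_piFinset_succ, Fin.sum_univ_succ, Fin.prod_univ_succ, Fin.cons_zero,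
    Fin.cons_succ, mul_sum, mul_ite, mul_zero]

lemma sum_filter_add_le_eq_sum_antidiagonal {α β R : Type*} [CommSemiring R]
    (A : Finset α) (B : Finset β) (u : α → ℕ) (v : β → ℕ) (F : α → R) (G : β → R) (n : ℕ) :
    ∑ x ∈ A ×ˢ B with u x.1 + v x.2 ≤ n, F x.1 * G x.2 =
      ∑ ab ∈ antidiagonal n, (∑ a ∈ A with u a ≤ ab.1, F a) * ∑ b ∈ B with v b = ab.2, G b := by
  have hmaps : ∀ x ∈ {x ∈ A ×ˢ B | u x.1 + v x.2 ≤ n}, (n - v x.2, v x.2) ∈ antidiagonal n := by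
    intro x hx
    rw [mem_filter] at hx
    rw [HasAntidiagonal.mem_antidiagonal]
    omega
  rw [← sum_fiberwise_of_maps_to hmaps]
  refine sum_congr rfl fun ab hab => ?_
  rw [sum_mul_sum, ← sum_product']
  refine sum_congr ?_ fun _ _ => rfl
  ext ⟨a, b⟩
  simp only [HasAntidiagonal.mem_antidiagonal] at hab
  simp only [mem_filter, mem_product, Prod.ext_iff]
  grind

lemma natCast_sub_mul_choose (a S : ℕ) : ((a : ℚ) - S) * a.choose S = a * (a - 1).choose S := by
  cases a with
  | zero => cases S <;> simp
  | succ a =>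
    rcases le_or_gt S (a + 1) with h | h
    · have h' : ((a.choose S * (a + 1) : ℕ) : ℚ) = ((a + 1).choose S * (a + 1 - S) : ℕ) := by
        rw [Nat.choose_mul_succ_eq]
      push_cast [Nat.cast_sub h] at h'
      rw [Nat.add_sub_cancel]
      push_cast
      linarith
    · simp [Nat.choose_eq_zero_of_lt h, Nat.choose_eq_zero_of_lt (by omega : a < S)]

lemma sum_Icc_choose_pred_mul_choose (a b c : ℕ) :
    ∑ x ∈ Icc (a + 1) c, (x - 1).choose a * (c - x).choose b = c.choose (a + b + 1) := by
  induction c generalizing b with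
  | zero => simp
  | succ c ih =>
    rcases lt_or_ge c a with h | h
    · rw [Icc_eq_empty (by omega), Nat.choose_eq_zero_of_lt (by omega), sum_empty]
    rw [sum_Icc_succ_top (by omega), Nat.add_sub_cancel, Nat.sub_self]
    cases b with
    | zero =>
      have := ih 0
      simp only [Nat.choose_zero_right, mul_one, add_zero] at this ⊢
      rw [this, Nat.choose_succ_succ' c a, add_comm]
    | succ b =>
      have hpascal : ∀ x ∈ Icc (a + 1) c, (x - 1).choose a * (c + 1 - x).choose (b + 1) =
          (x - 1).choose a * (c - x).choose b + (x - 1).choose a * (c - x).choose (b + 1) := by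
        intro x hx
        rw [mem_Icc] at hx
        rw [show c + 1 - x = c - x + 1 by omega, Nat.choose_succ_succ', mul_add]
      rw [sum_congr rfl hpascal, sum_add_distrib, ih, ih, Nat.choose_zero_succ, mul_zero, add_zero,
        show a + (b + 1) + 1 = a + b + 1 + 1 by ring, Nat.choose_succ_succ']

lemma sum_filter_sum_le_prod_choose {k : ℕ} (M : Fin k → ℕ) (hM : ∀ i, 1 ≤ M i) {c n : ℕ}
    (hc : c ≤ n) :
    ∑ m ∈ Fintype.piFinset (fun i => Icc (M i) n) with ∑ i, m i ≤ c,
      ∏ i, ((m i - 1).choose (M i - 1) : ℚ) = c.choose (∑ i, M i) := by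
  induction k generalizing c with
  | zero => simp
  | succ k ih =>
    obtain ⟨a, ha⟩ : ∃ a, M 0 = a + 1 := ⟨M 0 - 1, by have := hM 0; omega⟩
    rw [sum_filter_piFinset_succ_prod _ (· ≤ c) fun i x => ((x - 1).choose (M i - 1) : ℚ),
      ← sum_subset (Icc_subset_Icc_right hc)]
    · calc ∑ x ∈ Icc (M 0) c, ((x - 1).choose (M 0 - 1) : ℚ) *
            ∑ q ∈ Fintype.piFinset (fun i : Fin k => Icc (M i.succ) n) with x + ∑ i, q i ≤ c,
              ∏ i, ((q i - 1).choose (M i.succ - 1) : ℚ)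
          = ∑ x ∈ Icc (a + 1) c,
              (((x - 1).choose a * (c - x).choose (∑ i : Fin k, M i.succ) : ℕ) : ℚ) := by
            rw [ha]
            refine sum_congr rfl fun x hx => ?_
            rw [mem_Icc] at hx
            rw [Nat.cast_mul, ← ih (fun i => M i.succ) (fun i => hM i.succ) (by omega : c - x ≤ n),
              Nat.add_sub_cancel]
            congr 1
            exact sum_congr (filter_congr fun q _ => by omega) fun _ _ => rfl
        _ = c.choose (∑ i, M i) := by
            rw [← Nat.cast_sum, sum_Icc_choose_pred_mul_choose, Fin.sum_univ_succ, ha,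
              add_right_comm]
    · intro x hxn hx
      rw [mem_Icc] at hxn hx
      rw [filter_false_of_mem fun q _ => by omega, sum_empty, mul_zero]

-- The coefficient of `x ^ b` in `(-log (1 - x)) ^ r`.
def invCompositionSum : ℕ → ℕ → ℚ
  | 0, b => if b = 0 then 1 else 0
  | r + 1, b => ∑ p ∈ Icc 1 b, 1 / (p : ℚ) * invCompositionSum r (b - p)

lemma invCompositionSum_zero_right (r : ℕ) :
    invCompositionSum r 0 = if r = 0 then 1 else 0 := by
  cases r <;> simp [invCompositionSum]

lemma sum_filter_sum_eq_prod_one_div {r n b : ℕ} (hb : b ≤ n) :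
    ∑ p ∈ Fintype.piFinset (fun _ : Fin r => Icc 1 n) with ∑ j, p j = b, ∏ j, 1 / (p j : ℚ) =
      invCompositionSum r b := by
  induction r generalizing b with
  | zero => cases b <;> simp [invCompositionSum, eq_comm]
  | succ r ih =>
    rw [sum_filter_piFinset_succ_prod _ (· = b) fun _ x => 1 / (x : ℚ),
      ← sum_subset (Icc_subset_Icc_right hb), invCompositionSum]
    · refine sum_congr rfl fun x hx => ?_
      rw [mem_Icc] at hx
      rw [← ih (by omega : b - x ≤ n)]
      congr 1
      exact sum_congr (filter_congr fun q _ => by omega) fun _ _ => rfl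
    · intro x hxn hx
      rw [mem_Icc] at hxn hx
      rw [filter_false_of_mem fun q _ => by omega, sum_empty, mul_zero]

lemma sum_Icc_one_div_mul_sum_range_invCompositionSum (r b : ℕ) :
    ∑ p ∈ Icc 1 b, 1 / (p : ℚ) * ∑ c ∈ range (b - p), invCompositionSum r c =
      ∑ c ∈ range b, invCompositionSum (r + 1) c := by
  induction b with
  | zero => simp
  | succ b ih =>
    have hsplit : ∀ p ∈ Icc 1 b, 1 / (p : ℚ) * ∑ c ∈ range (b + 1 - p), invCompositionSum r c =
        1 / (p : ℚ) * ∑ c ∈ range (b - p), invCompositionSum r c +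
          1 / (p : ℚ) * invCompositionSum r (b - p) := by
      intro p hp
      rw [mem_Icc] at hp
      rw [show b + 1 - p = b - p + 1 by omega, sum_range_succ, mul_add]
    rw [sum_Icc_succ_top (by omega), Nat.sub_self, sum_range_zero, mul_zero, add_zero,
      sum_congr rfl hsplit, sum_add_distrib, ih, sum_range_succ, invCompositionSum]

-- Coefficientwise, `x (L ^ r)' = r L ^ (r - 1) · x / (1 - x)` for `L = -log (1 - x)`.
lemma natCast_mul_invCompositionSum (r b : ℕ) :
    (b : ℚ) * invCompositionSum r b = r * ∑ c ∈ range b, invCompositionSum (r - 1) c := by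
  induction r generalizing b with
  | zero => cases b <;> simp [invCompositionSum]
  | succ r ih =>
    have hsplit : ∀ p ∈ Icc 1 b, (b : ℚ) * (1 / p * invCompositionSum r (b - p)) =
        1 / (p : ℚ) * (((b - p : ℕ) : ℚ) * invCompositionSum r (b - p)) +
          invCompositionSum r (b - p) := by
      intro p hp
      rw [mem_Icc] at hp
      have hp0 : (p : ℚ) ≠ 0 := by exact_mod_cast (by omega : p ≠ 0)
      rw [Nat.cast_sub hp.2]
      field_simp
      ring
    have hconv : ∑ p ∈ Icc 1 b, 1 / (p : ℚ) * (((b - p : ℕ) : ℚ) * invCompositionSum r (b - p)) =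
        r * ∑ c ∈ range b, invCompositionSum r c := by
      simp_rw [ih, mul_left_comm _ (r : ℚ), ← mul_sum]
      cases r with
      | zero => simp
      | succ r => rw [Nat.add_sub_cancel, sum_Icc_one_div_mul_sum_range_invCompositionSum]
    have hreflect : ∑ p ∈ Icc 1 b, invCompositionSum r (b - p) =
        ∑ c ∈ range b, invCompositionSum r c := by
      apply sum_nbij' (fun p => b - p) (fun c => b - c) <;> simp_all <;> omega
    rw [invCompositionSum, mul_sum, sum_congr rfl hsplit, sum_add_distrib, hconv, hreflect,
      Nat.add_sub_cancel]
    push_cast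
    ring

def chooseConv (S r n : ℕ) : ℚ :=
  ∑ x ∈ antidiagonal n, (x.1.choose S : ℚ) * invCompositionSum r x.2

lemma chooseConv_succ (S r n : ℕ) :
    ((n : ℚ) + 1 - S) * chooseConv S r (n + 1) =
      (n + 1) * chooseConv S r n + r * chooseConv S (r - 1) n := by
  have hsplit : ∀ x ∈ antidiagonal (n + 1),
      ((n : ℚ) + 1 - S) * ((x.1.choose S : ℚ) * invCompositionSum r x.2) =
        ((x.1 : ℚ) - S) * x.1.choose S * invCompositionSum r x.2 +
          x.1.choose S * (x.2 * invCompositionSum r x.2) := by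
    intro x hx
    have : (x.1 : ℚ) + x.2 = n + 1 := by exact_mod_cast HasAntidiagonal.mem_antidiagonal.1 hx
    linear_combination (-(x.1.choose S : ℚ) * invCompositionSum r x.2) * this
  have hfirst :
      ∑ x ∈ antidiagonal (n + 1), ((x.1 : ℚ) - S) * x.1.choose S * invCompositionSum r x.2 =
        ∑ x ∈ antidiagonal n, ((x.1 : ℚ) + 1) * x.1.choose S * invCompositionSum r x.2 := by
    simp_rw [natCast_sub_mul_choose]
    rw [Nat.sum_antidiagonal_succ]
    simp
  have hsecond :
      ∑ x ∈ antidiagonal (n + 1), (x.1.choose S : ℚ) * (x.2 * invCompositionSum r x.2) =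
        ∑ x ∈ antidiagonal n, (x.1.choose S : ℚ) * (x.2 * invCompositionSum r x.2) +
          r * chooseConv S (r - 1) n := by
    simp_rw [natCast_mul_invCompositionSum]
    rw [Nat.sum_antidiagonal_succ', chooseConv, mul_sum (antidiagonal n), ← sum_add_distrib]
    simp only [range_zero, sum_empty, mul_zero, zero_add, sum_range_succ]
    refine sum_congr rfl fun x _ => by ring
  rw [chooseConv, chooseConv, mul_sum, sum_congr rfl hsplit, sum_add_distrib, hfirst, hsecond,
    ← add_assoc, ← sum_add_distrib, mul_sum]
  congr 1
  refine sum_congr rfl fun x hx => ?_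
  have : (x.1 : ℚ) + x.2 = n := by exact_mod_cast HasAntidiagonal.mem_antidiagonal.1 hx
  rw [← this]
  ring

lemma factorial_mul_chooseConv {S n : ℕ} (hn : S ≤ n) (r : ℕ) :
    ((n - S).factorial : ℚ) * chooseConv S r n =
      r.factorial * rStirlingFirst (S + 1) (n + 1) (r + S + 1) := by
  induction n, hn using Nat.le_induction generalizing r with
  | base =>
    have hconv : chooseConv S r S = invCompositionSum r 0 := by
      rw [chooseConv, sum_eq_single (S, 0)]
      · simp
      · intro x hx hne
        have : x.1 < S := by
          rw [HasAntidiagonal.mem_antidiagonal] at hx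
          rcases x with ⟨a, b⟩
          simp only [ne_eq, Prod.mk.injEq] at hne hx ⊢
          omega
        simp [Nat.choose_eq_zero_of_lt this]
      · simp
    rw [hconv, invCompositionSum_zero_right, rStirlingFirst_self]
    rcases Nat.eq_zero_or_pos r with rfl | hr
    · simp
    · simp [hr.ne']
  | succ n hn ih =>
    have hlower : (r : ℚ) * ((n - S).factorial * chooseConv S (r - 1) n) =
        r.factorial * rStirlingFirst (S + 1) (n + 1) (r + S) := by
      cases r with
      | zero => simp [rStirlingFirst_of_lt (Nat.lt_succ_self S)]
      | succ r =>
        rw [Nat.add_sub_cancel, ih, Nat.factorial_succ, add_right_comm r 1 S]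
        push_cast
        ring
    have hfac : ((n + 1 - S).factorial : ℚ) = ((n : ℚ) + 1 - S) * (n - S).factorial := by
      rw [Nat.sub_add_comm hn, Nat.factorial_succ]
      push_cast [Nat.cast_sub hn]
      ring
    calc ((n + 1 - S).factorial : ℚ) * chooseConv S r (n + 1)
        = (n - S).factorial * (((n : ℚ) + 1 - S) * chooseConv S r (n + 1)) := by
          rw [hfac]; ring
      _ = (n + 1) * ((n - S).factorial * chooseConv S r n) +
            r * ((n - S).factorial * chooseConv S (r - 1) n) := by
          rw [chooseConv_succ]; ring
      _ = r.factorial * rStirlingFirst (S + 1) (n + 1 + 1) (r + S + 1) := by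
          rw [ih, hlower, rStirlingFirst_succ_succ (by omega : S + 1 ≤ n + 1) (r + S)]
          push_cast
          ring

/-- Lemma B.8 ('sum_prod_comb_stirstg'). For `M : Fin k → ℕ` with
`M_i ≥ 1` and `n ≥ ∑ M_i`: the sum over pairs `(m, p)` with `m_i ≥ M_i`, `p_j ≥ 1`
and `∑ m + ∑ p ≤ n` of `∏_i C(m_i - 1, M_i - 1) · ∏_j 1/p_j` equals
`r!/(n - |M|)! · c_{|M|+1}(n+1, r+|M|+1)`. -/
theorem stmt_13 (k r n : ℕ) (M : Fin k → ℕ) (hM : ∀ i, 1 ≤ M i)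
    (hn : ∑ i, M i ≤ n) :
    ∑ mp ∈ ((Fintype.piFinset fun i : Fin k => Finset.Icc (M i) n) ×ˢ
          (Fintype.piFinset fun _ : Fin r => Finset.Icc 1 n)).filter
        (fun mp => (∑ i, mp.1 i) + ∑ j, mp.2 j ≤ n),
      (∏ i : Fin k, ((mp.1 i - 1).choose (M i - 1) : ℚ)) *
        ∏ j : Fin r, (1 : ℚ) / (mp.2 j : ℚ) =
      (r.factorial : ℚ) / ((n - ∑ i, M i).factorial : ℚ) *
        (rStirlingFirst ((∑ i, M i) + 1) (n + 1) (r + (∑ i, M i) + 1) : ℚ) := by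
  calc _ = ∑ x ∈ antidiagonal n, (x.1.choose (∑ i, M i) : ℚ) * invCompositionSum r x.2 := by
        rw [sum_filter_add_le_eq_sum_antidiagonal _ _ (fun m : Fin k → ℕ => ∑ i, m i)
          (fun p : Fin r → ℕ => ∑ j, p j) (fun m => ∏ i, ((m i - 1).choose (M i - 1) : ℚ))
          (fun p => ∏ j, 1 / (p j : ℚ))]
        refine sum_congr rfl fun x hx => ?_
        have := HasAntidiagonal.mem_antidiagonal.1 hx
        rw [sum_filter_sum_le_prod_choose M hM (by omega),
          sum_filter_sum_eq_prod_one_div (by omega)]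
    _ = _ := by
        rw [← chooseConv, div_mul_eq_mul_div, eq_div_iff (by positivity), mul_comm,
          factorial_mul_chooseConv hn]
end

section
/- Let W be an additive commutative monoid (of weights), X a type (of states), and V an additive commutative monoid. Let f : Multiset (W × X) → V satisfy weight-additivity: for all w₁, w₂ ∈ W, x ∈ X, and S : Multiset (W × X), f((w₁ + w₂, x) ::ₘ S) = f((w₁, x) ::ₘ S) + f((w₂, x) ::ₘ S). Then for all m ∈ ℕ, w₁, w₂ ∈ W, x ∈ X, and S : Multiset (W × X): f(replicate m (w₁ + w₂, x) + S) = Σ_{m₁ + m₂ = m} C(m, m₁) • f(replicate m₁ (w₁, x) + replicate m₂ (w₂, x) + S), where C(m, m₁) is the binomial coefficient, • is scalar multiplication by a natural number, replicate m a denotes the multiset consisting of m copies of a, and ::ₘ denotes adjoining an element to a multiset. -/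
/-! Peeling off one copy of the merged pair splits `f` into two terms, one with an extra
first-weight pair and one with an extra second-weight pair; by induction on `m` the
coefficients obey Pascal's rule, which is `Finset.sum_antidiagonal_choose_succ_nsmul`. -/

open Finset Multiset

theorem Multiset.replicate_add_replicate_add_cons_left {α : Type*} (i j : ℕ) (a b : α)
    (S : Multiset α) :
    replicate i a + replicate j b + a ::ₘ S = replicate (i + 1) a + replicate j b + S := by
  simp only [add_cons, replicate_succ, cons_add]

theorem Multiset.replicate_add_replicate_add_cons_right {α : Type*} (i j : ℕ) (a b : α)
    (S : Multiset α) :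
    replicate i a + replicate j b + b ::ₘ S = replicate i a + replicate (j + 1) b + S := by
  simp only [add_cons, replicate_succ, cons_add]

theorem apply_replicate_add_eq_sum_choose_nsmul {α V : Type*} [AddCommMonoid V]
    (f : Multiset α → V) {a b c : α} (h : ∀ S, f (c ::ₘ S) = f (a ::ₘ S) + f (b ::ₘ S))
    (m : ℕ) (S : Multiset α) :
    f (replicate m c + S) =
      ∑ p ∈ antidiagonal m, m.choose p.1 • f (replicate p.1 a + replicate p.2 b + S) := by
  induction m generalizing S with
  | zero => simp
  | succ n ih =>
    calc f (replicate (n + 1) c + S)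
        = f (replicate n c + a ::ₘ S) + f (replicate n c + b ::ₘ S) := by
          rw [replicate_succ, cons_add, h, add_cons, add_cons]
      _ = ∑ p ∈ antidiagonal n, n.choose p.1 • f (replicate p.1 a + replicate (p.2 + 1) b + S)
          + ∑ p ∈ antidiagonal n, n.choose p.2 • f (replicate (p.1 + 1) a + replicate p.2 b + S) := by
          rw [ih, ih, add_comm]
          congr 1
          · simp only [replicate_add_replicate_add_cons_right]
          · refine sum_congr rfl fun p hp => ?_
            rw [Nat.choose_symm_of_eq_add (mem_antidiagonal.mp hp).symm,
              replicate_add_replicate_add_cons_left]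
      _ = _ := (sum_antidiagonal_choose_succ_nsmul
          (fun i j => f (replicate i a + replicate j b + S)) n).symm

/-- Lemma B.5 ('basis_comp_multi_expansion'). If `f` on multisets
of weight–state pairs is additive in the weights, then replicating a merged
weight `m` times expands binomially. -/
theorem stmt_14 {W X V : Type*} [AddCommMonoid W] [AddCommMonoid V]
    (f : Multiset (W × X) → V)
    (hf : ∀ (w₁ w₂ : W) (x : X) (S : Multiset (W × X)),
      f ((w₁ + w₂, x) ::ₘ S) = f ((w₁, x) ::ₘ S) + f ((w₂, x) ::ₘ S)) :
    ∀ (m : ℕ) (w₁ w₂ : W) (x : X) (S : Multiset (W × X)),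
      f (Multiset.replicate m (w₁ + w₂, x) + S) =
        ∑ p ∈ Finset.HasAntidiagonal.antidiagonal m,
          m.choose p.1 •
            f (Multiset.replicate p.1 (w₁, x) + Multiset.replicate p.2 (w₂, x) + S) :=
  fun m w₁ w₂ x => apply_replicate_add_eq_sum_choose_nsmul f (hf w₁ w₂ x) m
end

section
/- Let W be an additive commutative monoid (of weights), X a type (of states), and V an additive commutative monoid. Let f : Multiset (W × X) → V satisfy the merge relation: for all w₁, w₂ ∈ W, x ∈ X, and S : Multiset (W × X), f((w₁ + w₂, x) ::ₘ S) = f((w₁, x) ::ₘ S) + f((w₂, x) ::ₘ S) + f((w₁, x) ::ₘ (w₂, x) ::ₘ S). Then for all m ∈ ℕ, w₁, w₂ ∈ W, x ∈ X, and S : Multiset (W × X): f(replicate m (w₁ + w₂, x) + S) = Σ_{(m₁, m₂)} B(m₁, m₂, m) • f(replicate m₁ (w₁, x) + replicate m₂ (w₂, x) + S), where the sum ranges over all pairs (m₁, m₂) of naturals with m₁ ≤ m, m₂ ≤ m, and m₁ + m₂ ≥ m, and B(m₁, m₂, m) = m! / ((m − m₁)! · (m − m₂)! · (m₁ + m₂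 − m)!) is the trinomial coefficient, • is scalar multiplication by a natural number, replicate m a denotes the multiset consisting of m copies of a, and ::ₘ denotes adjoining an element to a multiset. -/
set_option linter.unnecessarySeqFocus false

def Bc (m a b : ℕ) : ℕ :=
  m.factorial / ((m - a).factorial * (m - b).factorial * (a + b - m).factorial)

def Fm (m : ℕ) : Finset (ℕ × ℕ) :=
  (Finset.range (m + 1) ×ˢ Finset.range (m + 1)).filter (fun p => m ≤ p.1 + p.2)

lemma Bc_eq_choose (m a b : ℕ) (ha : a ≤ m) (hb : b ≤ m) (hab : m ≤ a + b) :
    Bc m a b = m.choose a * a.choose (m - b) := by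
  have h1 : m.choose a * a.factorial * (m - a).factorial = m.factorial :=
    Nat.choose_mul_factorial_mul_factorial ha
  have h2' : m - b ≤ a := by omega
  have h2 : a.choose (m - b) * (m - b).factorial * (a - (m - b)).factorial = a.factorial :=
    Nat.choose_mul_factorial_mul_factorial h2'
  have h3 : a - (m - b) = a + b - m := by omega
  rw [h3] at h2
  have key : m.factorial =
      m.choose a * a.choose (m - b) * ((m - a).factorial * (m - b).factorial * (a + b - m).factorial) := by
    rw [← h1, ← h2]; ring
  unfold Bc
  rw [key]
  exact Nat.mul_div_cancel _ (by positivity)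

lemma Bc_pascal (m a b : ℕ) (ha : a ≤ m + 1) (hb : b ≤ m + 1) (hab : m + 1 ≤ a + b) :
    Bc (m + 1) a b =
      (if b ≤ m then Bc m (a - 1) b else 0)
      + (if a ≤ m then Bc m a (b - 1) else 0)
      + (if m + 2 ≤ a + b then Bc m (a - 1) (b - 1) else 0) := by
  rw [Bc_eq_choose (m+1) a b ha hb hab]
  split_ifs with h1 h2 h3 h3 h2 h3 h3
  · -- b ≤ m, a ≤ m, m+2 ≤ a+b
    rw [Bc_eq_choose m (a-1) b (by omega) (by omega) (by omega),
        Bc_eq_choose m a (b-1) (by omega) (by omega) (by omega),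
        Bc_eq_choose m (a-1) (b-1) (by omega) (by omega) (by omega)]
    obtain ⟨a₁, rfl⟩ : ∃ a₁, a = a₁ + 1 := ⟨a - 1, by omega⟩
    obtain ⟨c, hc⟩ : ∃ c, m - b = c ∧ m + 1 - b = c + 1 ∧ m - (b - 1) = c + 1 := ⟨m - b, by omega⟩
    obtain ⟨hc1, hc2, hc3⟩ := hc
    rw [hc1, hc2, hc3]
    simp only [Nat.add_sub_cancel, Nat.choose_succ_succ]
    ring
  · -- b ≤ m, a ≤ m, a+b = m+1
    rw [Bc_eq_choose m (a-1) b (by omega) (by omega) (by omega),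
        Bc_eq_choose m a (b-1) (by omega) (by omega) (by omega)]
    obtain ⟨a₁, rfl⟩ : ∃ a₁, a = a₁ + 1 := ⟨a - 1, by omega⟩
    have e1 : m + 1 - b = a₁ + 1 := by omega
    have e2 : m - b = a₁ := by omega
    have e3 : m - (b - 1) = a₁ + 1 := by omega
    rw [e1, e2, e3]
    simp only [Nat.add_sub_cancel, Nat.choose_self, Nat.choose_succ_succ, mul_one,
      Nat.succ_eq_add_one]
    omega
  · -- b ≤ m, a = m+1, b ≥ 1
    have : a = m + 1 := by omega
    subst this
    simp only [Nat.add_sub_cancel]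
    rw [Bc_eq_choose m m b (by omega) (by omega) (by omega),
        Bc_eq_choose m m (b-1) (by omega) (by omega) (by omega)]
    obtain ⟨c, hc1, hc2, hc3⟩ : ∃ c, m - b = c ∧ m + 1 - b = c + 1 ∧ m - (b - 1) = c + 1 :=
      ⟨m - b, by omega⟩
    rw [hc1, hc2, hc3]
    simp [Nat.choose_succ_succ]
  · -- b ≤ m, a = m+1, b = 0
    have ha' : a = m + 1 := by omega
    have hb' : b = 0 := by omega
    subst ha'; subst hb'
    simp only [Nat.add_sub_cancel]
    rw [Bc_eq_choose m m 0 (by omega) (by omega) (by omega)]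
    simp
  · -- b = m+1, a ≤ m, a ≥ 1
    have hb' : b = m + 1 := by omega
    subst hb'
    simp only [Nat.add_sub_cancel]
    rw [Bc_eq_choose m a m (by omega) (by omega) (by omega),
        Bc_eq_choose m (a-1) m (by omega) (by omega) (by omega)]
    obtain ⟨a₁, rfl⟩ : ∃ a₁, a = a₁ + 1 := ⟨a - 1, by omega⟩
    simp [Nat.choose_succ_succ, Nat.sub_self]
    omega
  · -- b = m+1, a = 0
    have hb' : b = m + 1 := by omega
    have ha' : a = 0 := by omega
    subst hb'; subst ha'
    simp only [Nat.add_sub_cancel]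
    rw [Bc_eq_choose m 0 m (by omega) (by omega) (by omega)]
    simp
  · -- b = m+1, a = m+1
    have hb' : b = m + 1 := by omega
    have ha' : a = m + 1 := by omega
    subst hb'; subst ha'
    simp only [Nat.add_sub_cancel]
    rw [Bc_eq_choose m m m (by omega) (by omega) (by omega)]
    simp
  · omega

lemma mem_Fm {m : ℕ} {p : ℕ × ℕ} : p ∈ Fm m ↔ p.1 ≤ m ∧ p.2 ≤ m ∧ m ≤ p.1 + p.2 := by
  simp [Fm, Finset.mem_filter, Finset.mem_product, Finset.mem_range]
  omega

lemma key {V : Type*} [AddCommMonoid V] (m : ℕ) (g : ℕ → ℕ → V) :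
    ∑ p ∈ Fm (m + 1), Bc (m + 1) p.1 p.2 • g p.1 p.2
      = (∑ p ∈ Fm m, Bc m p.1 p.2 • g (p.1 + 1) p.2)
        + (∑ p ∈ Fm m, Bc m p.1 p.2 • g p.1 (p.2 + 1))
        + (∑ p ∈ Fm m, Bc m p.1 p.2 • g (p.1 + 1) (p.2 + 1)) := by
  have step1 : ∑ p ∈ Fm (m + 1), Bc (m + 1) p.1 p.2 • g p.1 p.2
      = ∑ p ∈ Fm (m + 1),
          ((if p.2 ≤ m then Bc m (p.1 - 1) p.2 else 0) • g p.1 p.2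
          + (if p.1 ≤ m then Bc m p.1 (p.2 - 1) else 0) • g p.1 p.2
          + (if m + 2 ≤ p.1 + p.2 then Bc m (p.1 - 1) (p.2 - 1) else 0) • g p.1 p.2) := by
    refine Finset.sum_congr rfl (fun p hp => ?_)
    obtain ⟨h1, h2, h3⟩ := mem_Fm.mp hp
    rw [Bc_pascal m p.1 p.2 h1 h2 h3, add_smul, add_smul]
  have e1 : ∑ p ∈ Fm (m + 1), (if p.2 ≤ m then Bc m (p.1 - 1) p.2 else 0) • g p.1 p.2
      = ∑ p ∈ Fm m, Bc m p.1 p.2 • g (p.1 + 1) p.2 := by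
    rw [show (∑ p ∈ Fm (m + 1), (if p.2 ≤ m then Bc m (p.1 - 1) p.2 else 0) • g p.1 p.2)
        = ∑ p ∈ (Fm (m + 1)).filter (fun p => p.2 ≤ m), Bc m (p.1 - 1) p.2 • g p.1 p.2 by
      rw [Finset.sum_filter]
      exact Finset.sum_congr rfl (fun p _ => by split_ifs <;> simp)]
    refine Finset.sum_bij' (fun p _ => (p.1 - 1, p.2)) (fun p _ => (p.1 + 1, p.2))
      ?_ ?_ ?_ ?_ ?_
    · intro a ha
      simp only [Finset.mem_filter, mem_Fm] at ha ⊢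
      exact ⟨by omega, by omega, by omega⟩
    · intro a ha
      simp only [Finset.mem_filter, mem_Fm] at ha ⊢
      refine ⟨⟨by omega, by omega, by omega⟩, by omega⟩
    · intro a ha
      simp only [Finset.mem_filter, mem_Fm] at ha
      ext <;> simp <;> omega
    · intro a ha
      ext <;> simp
    · intro a ha
      simp only [Finset.mem_filter, mem_Fm] at ha
      have : a.1 - 1 + 1 = a.1 := by omega
      simp [this]
  have e2 : ∑ p ∈ Fm (m + 1), (if p.1 ≤ m then Bc m p.1 (p.2 - 1) else 0) • g p.1 p.2
      = ∑ p ∈ Fm m, Bc m p.1 p.2 • g p.1 (p.2 + 1) := by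
    rw [show (∑ p ∈ Fm (m + 1), (if p.1 ≤ m then Bc m p.1 (p.2 - 1) else 0) • g p.1 p.2)
        = ∑ p ∈ (Fm (m + 1)).filter (fun p => p.1 ≤ m), Bc m p.1 (p.2 - 1) • g p.1 p.2 by
      rw [Finset.sum_filter]
      exact Finset.sum_congr rfl (fun p _ => by split_ifs <;> simp)]
    refine Finset.sum_bij' (fun p _ => (p.1, p.2 - 1)) (fun p _ => (p.1, p.2 + 1))
      ?_ ?_ ?_ ?_ ?_
    · intro a ha
      simp only [Finset.mem_filter, mem_Fm] at ha ⊢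
      exact ⟨by omega, by omega, by omega⟩
    · intro a ha
      simp only [Finset.mem_filter, mem_Fm] at ha ⊢
      refine ⟨⟨by omega, by omega, by omega⟩, by omega⟩
    · intro a ha
      simp only [Finset.mem_filter, mem_Fm] at ha
      ext <;> simp <;> omega
    · intro a ha
      ext <;> simp
    · intro a ha
      simp only [Finset.mem_filter, mem_Fm] at ha
      have : a.2 - 1 + 1 = a.2 := by omega
      simp [this]
  have e3 : ∑ p ∈ Fm (m + 1),
        (if m + 2 ≤ p.1 + p.2 then Bc m (p.1 - 1) (p.2 - 1) else 0) • g p.1 p.2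
      = ∑ p ∈ Fm m, Bc m p.1 p.2 • g (p.1 + 1) (p.2 + 1) := by
    rw [show (∑ p ∈ Fm (m + 1),
          (if m + 2 ≤ p.1 + p.2 then Bc m (p.1 - 1) (p.2 - 1) else 0) • g p.1 p.2)
        = ∑ p ∈ (Fm (m + 1)).filter (fun p => m + 2 ≤ p.1 + p.2),
            Bc m (p.1 - 1) (p.2 - 1) • g p.1 p.2 by
      rw [Finset.sum_filter]
      exact Finset.sum_congr rfl (fun p _ => by split_ifs <;> simp)]
    refine Finset.sum_bij' (fun p _ => (p.1 - 1, p.2 - 1)) (fun p _ => (p.1 + 1, p.2 + 1))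
      ?_ ?_ ?_ ?_ ?_
    · intro a ha
      simp only [Finset.mem_filter, mem_Fm] at ha ⊢
      exact ⟨by omega, by omega, by omega⟩
    · intro a ha
      simp only [Finset.mem_filter, mem_Fm] at ha ⊢
      refine ⟨⟨by omega, by omega, by omega⟩, by omega⟩
    · intro a ha
      simp only [Finset.mem_filter, mem_Fm] at ha
      ext <;> simp <;> omega
    · intro a ha
      ext <;> simp
    · intro a ha
      simp only [Finset.mem_filter, mem_Fm] at ha
      have h1 : a.1 - 1 + 1 = a.1 := by omega
      have h2 : a.2 - 1 + 1 = a.2 := by omega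
      simp [h1, h2]
  rw [step1, Finset.sum_add_distrib, Finset.sum_add_distrib, e1, e2, e3]

lemma cons_shift_left {α : Type*} (u : α) (t s : Multiset α) (n : ℕ) :
    Multiset.replicate n u + t + (u ::ₘ s) = Multiset.replicate (n + 1) u + t + s := by
  simp only [Multiset.replicate_succ, Multiset.cons_add, Multiset.add_cons]

lemma cons_shift_right {α : Type*} (u : α) (t s : Multiset α) (n : ℕ) :
    t + Multiset.replicate n u + (u ::ₘ s) = t + Multiset.replicate (n + 1) u + s := by
  simp only [Multiset.replicate_succ, Multiset.cons_add, Multiset.add_cons]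

lemma main_aux {W X V : Type*} [AddCommMonoid W] [AddCommMonoid V]
    (f : Multiset (W × X) → V)
    (hf : ∀ (w₁ w₂ : W) (x : X) (S : Multiset (W × X)),
      f ((w₁ + w₂, x) ::ₘ S) =
        f ((w₁, x) ::ₘ S) + f ((w₂, x) ::ₘ S) + f ((w₁, x) ::ₘ (w₂, x) ::ₘ S)) :
    ∀ (m : ℕ) (w₁ w₂ : W) (x : X) (S : Multiset (W × X)),
      f (Multiset.replicate m (w₁ + w₂, x) + S) =
        ∑ p ∈ Fm m, Bc m p.1 p.2 •
          f (Multiset.replicate p.1 (w₁, x) + Multiset.replicate p.2 (w₂, x) + S) := by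
  intro m
  induction m with
  | zero =>
    intro w₁ w₂ x S
    rw [show Fm 0 = {(0, 0)} from by decide]
    simp [Bc]
  | succ m ih =>
    intro w₁ w₂ x S
    rw [Multiset.replicate_succ, Multiset.cons_add,
      hf w₁ w₂ x (Multiset.replicate m (w₁ + w₂, x) + S)]
    simp only [← Multiset.add_cons]
    rw [ih w₁ w₂ x ((w₁, x) ::ₘ S), ih w₁ w₂ x ((w₂, x) ::ₘ S),
      ih w₁ w₂ x ((w₁, x) ::ₘ (w₂, x) ::ₘ S)]
    have t1 : ∑ p ∈ Fm m, Bc m p.1 p.2 •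
          f (Multiset.replicate p.1 (w₁, x) + Multiset.replicate p.2 (w₂, x) + ((w₁, x) ::ₘ S))
        = ∑ p ∈ Fm m, Bc m p.1 p.2 •
          f (Multiset.replicate (p.1 + 1) (w₁, x) + Multiset.replicate p.2 (w₂, x) + S) := by
      refine Finset.sum_congr rfl (fun p _ => ?_)
      rw [cons_shift_left]
    have t2 : ∑ p ∈ Fm m, Bc m p.1 p.2 •
          f (Multiset.replicate p.1 (w₁, x) + Multiset.replicate p.2 (w₂, x) + ((w₂, x) ::ₘ S))
        = ∑ p ∈ Fm m, Bc m p.1 p.2 •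
          f (Multiset.replicate p.1 (w₁, x) + Multiset.replicate (p.2 + 1) (w₂, x) + S) := by
      refine Finset.sum_congr rfl (fun p _ => ?_)
      rw [cons_shift_right]
    have t3 : ∑ p ∈ Fm m, Bc m p.1 p.2 •
          f (Multiset.replicate p.1 (w₁, x) + Multiset.replicate p.2 (w₂, x)
              + ((w₁, x) ::ₘ (w₂, x) ::ₘ S))
        = ∑ p ∈ Fm m, Bc m p.1 p.2 •
          f (Multiset.replicate (p.1 + 1) (w₁, x) + Multiset.replicate (p.2 + 1) (w₂, x) + S) := by
      refine Finset.sum_congr rfl (fun p _ => ?_)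
      rw [show Multiset.replicate p.1 (w₁, x) + Multiset.replicate p.2 (w₂, x)
              + ((w₁, x) ::ₘ (w₂, x) ::ₘ S)
          = Multiset.replicate p.1 (w₁, x) + Multiset.replicate p.2 (w₂, x)
              + ((w₂, x) ::ₘ (w₁, x) ::ₘ S) from by rw [Multiset.cons_swap],
        cons_shift_right, cons_shift_left]
    rw [t1, t2, t3]
    exact (key m (fun a b =>
      f (Multiset.replicate a (w₁, x) + Multiset.replicate b (w₂, x) + S))).symm




/-- Lemma B.6 ('coupl_comp_multi_expansion'). If `f` on multisets
of weight–state pairs satisfies the merge relation, then replicating a merged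
weight `m` times expands trinomially over pairs `(m₁, m₂)` with
`m₁, m₂ ≤ m ≤ m₁ + m₂`, with coefficients `B(m₁,m₂,m) = m!/((m-m₁)!(m-m₂)!(m₁+m₂-m)!)`. -/
theorem stmt_15 {W X V : Type*} [AddCommMonoid W] [AddCommMonoid V]
    (f : Multiset (W × X) → V)
    (hf : ∀ (w₁ w₂ : W) (x : X) (S : Multiset (W × X)),
      f ((w₁ + w₂, x) ::ₘ S) =
        f ((w₁, x) ::ₘ S) + f ((w₂, x) ::ₘ S) + f ((w₁, x) ::ₘ (w₂, x) ::ₘ S)) :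
    ∀ (m : ℕ) (w₁ w₂ : W) (x : X) (S : Multiset (W × X)),
      f (Multiset.replicate m (w₁ + w₂, x) + S) =
        ∑ p ∈ (Finset.range (m + 1) ×ˢ Finset.range (m + 1)).filter
            (fun p => m ≤ p.1 + p.2),
          (m.factorial / ((m - p.1).factorial * (m - p.2).factorial *
              (p.1 + p.2 - m).factorial)) •
            f (Multiset.replicate p.1 (w₁, x) + Multiset.replicate p.2 (w₂, x) + S) := by
  intro m w₁ w₂ x S
  exact main_aux f hf m w₁ w₂ x S
end

section
/- Let α be a finite type and V a vector space over ℚ. Let B : (α → ℕ) → V have finite support, and define F : (α → ℕ) → V by F(m) = Σ_M [ Π_{c ∈ α} ((m_c)! / (M_c)!) · S(M_c, m_c) ] • B(M), where the sum ranges over all M : α → ℕ (only finitely many terms are nonzero since B has finite support), the bracketed coefficient is a rational number, and • is scalar multiplication. Then F has finite support and, for every m : α → ℕ, B(m) = Σ_M (−1)^{|M| − |m|} [ Π_{c ∈ α} ((m_c)! / (M_c)!) · c(M_c, m_c) ] • F(M), where |m| = Σ_{c∈α} m_c. -/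
/-- Stirling numbers of the second kind, defined by the recurrence
`S(n,k) = k·S(n-1,k) + S(n-1,k-1)` for `n,k > 0`, with `S(0,0) = 1`,
`S(0,k) = 0` for `k > 0` and `S(n,0) = 0` for `n > 0`. -/
def stirlingSecond : ℕ → ℕ → ℕ
  | 0, 0 => 1
  | 0, _ + 1 => 0
  | _ + 1, 0 => 0
  | n + 1, k + 1 => (k + 1) * stirlingSecond n (k + 1) + stirlingSecond n k

/-!
The one-variable kernels `m!/M! · S(M, m)` and `(-1)^(M-m) · m!/M! · c(M, m)` are mutually
inverse lower-triangular matrices: this is the classical orthogonality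
`∑ₖ (-1)^k c(k, m) S(n, k) = (-1)^m δₙₘ`, which follows by induction on `n` from the two
recurrences. The multivariate kernels are products of one-variable ones, so the sums over a
box factor into products of one-variable sums and the kernels are again inverse. Every `M`
that contributes lies below an upper bound `b` of the support of `B`, so all sums may be taken
over the finite box `Iic b`.
-/

open Finset

theorem stirlingFirst_eq_nat_stirlingFirst (n k : ℕ) :
    stirlingFirst n k = Nat.stirlingFirst n k := by
  induction n generalizing k with
  | zero => cases k <;> rfl
  | succ n ih => cases k <;> simp [stirlingFirst, Nat.stirlingFirst_succ_succ, ih]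

theorem stirlingSecond_eq_nat_stirlingSecond (n k : ℕ) :
    stirlingSecond n k = Nat.stirlingSecond n k := by
  induction n generalizing k with
  | zero => cases k <;> rfl
  | succ n ih => cases k <;> simp [stirlingSecond, Nat.stirlingSecond_succ_succ, ih]

namespace Nat

theorem sum_mul_stirlingSecond_succ (g : ℕ → ℤ) {n N : ℕ} (hn : n < N) :
    ∑ k ∈ range (N + 1), g k * stirlingSecond (n + 1) k =
      ∑ k ∈ range N, (k * g k + g (k + 1)) * stirlingSecond n k := by
  have hshift : ∑ k ∈ range N, g (k + 1) * ((k + 1) * stirlingSecond n (k + 1) : ℕ) =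
      ∑ k ∈ range N, k * g k * stirlingSecond n k := calc
    _ = ∑ k ∈ range (N + 1), k * g k * stirlingSecond n k := by
      rw [sum_range_succ']
      simp [mul_assoc, mul_left_comm]
    _ = _ := by simp [sum_range_succ, stirlingSecond_eq_zero_of_lt hn]
  rw [sum_range_succ']
  simp only [stirlingSecond_succ_zero, stirlingSecond_succ_succ, Nat.cast_zero, mul_zero,
    add_zero, Nat.cast_add, mul_add, sum_add_distrib, hshift]
  simp only [add_mul, sum_add_distrib]

theorem sum_neg_one_pow_mul_stirlingFirst_mul_stirlingSecond {n N : ℕ} (hn : n < N) (m : ℕ) :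
    ∑ k ∈ range N, (-1 : ℤ) ^ k * stirlingFirst k m * stirlingSecond n k =
      if n = m then (-1) ^ m else 0 := by
  induction n generalizing N m with
  | zero =>
    rw [sum_eq_single 0 (fun k _ hk => by simp [stirlingSecond_eq_zero_of_lt (pos_of_ne_zero hk)])
      (fun h => absurd (mem_range.2 hn) h)]
    cases m <;> simp
  | succ n ih =>
    obtain ⟨N, rfl⟩ : ∃ N', N = N' + 1 := ⟨N - 1, by omega⟩
    rw [sum_mul_stirlingSecond_succ _ (by omega)]
    cases m with
    | zero =>
      refine (sum_eq_zero fun k _ => ?_).trans (if_neg n.succ_ne_zero).symm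
      cases k <;> simp
    | succ m =>
      have hstep (k : ℕ) : k * ((-1 : ℤ) ^ k * stirlingFirst k (m + 1)) +
          (-1) ^ (k + 1) * stirlingFirst (k + 1) (m + 1) = -((-1) ^ k * stirlingFirst k m) := by
        rw [stirlingFirst_succ_succ]
        push_cast
        ring
      simp_rw [hstep, neg_mul, sum_neg_distrib, ih (by omega : n < N), add_left_inj, pow_succ]
      split_ifs <;> simp

end Nat

theorem zpow_sum₀ {ι G : Type*} [CommGroupWithZero G] {a : G} (ha : a ≠ 0) (s : Finset ι)
    (f : ι → ℤ) : a ^ (∑ i ∈ s, f i) = ∏ i ∈ s, a ^ f i := by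
  classical
  induction s using Finset.induction_on with
  | empty => simp
  | insert i s hi ih => rw [sum_insert hi, prod_insert hi, zpow_add₀ ha, ih]

theorem finsum_smul_eq_sum_of_support_subset {ι R V : Type*} [Zero R] [AddCommMonoid V]
    [SMulWithZero R V] (c : ι → R) {g : ι → V} {s : Finset ι} (h : Function.support g ⊆ s) :
    ∑ᶠ i, c i • g i = ∑ i ∈ s, c i • g i :=
  finsum_eq_sum_of_support_subset _ ((Function.support_smul_subset_right c g).trans h)

theorem sum_smul_sum_smul_eq_self {ι R V : Type*} [DecidableEq ι] [Semiring R] [AddCommMonoid V]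
    [Module R V] {s : Finset ι} {t u : ι → ι → R}
    (htu : ∀ m, ∀ n ∈ s, ∑ M ∈ s, t m M * u M n = if m = n then 1 else 0) {B : ι → V}
    (hB : Function.support B ⊆ s) (m : ι) :
    ∑ M ∈ s, t m M • ∑ N ∈ s, u M N • B N = B m := by
  simp_rw [smul_sum, smul_smul]
  rw [sum_comm]
  simp_rw [← sum_smul]
  rw [sum_congr rfl fun n hn => by rw [htu m n hn]]
  simp only [ite_smul, one_smul, zero_smul, sum_ite_eq]
  exact ite_eq_left_iff.2 fun hm => (Function.notMem_support.1 fun h => hm (hB h)).symm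

def stirlingSecondCoeff (m M : ℕ) : ℚ :=
  (m.factorial : ℚ) / (M.factorial : ℚ) * (stirlingSecond M m : ℚ)

def stirlingFirstCoeff (m M : ℕ) : ℚ :=
  (-1 : ℚ) ^ ((M : ℤ) - m) * ((m.factorial : ℚ) / (M.factorial : ℚ) * (stirlingFirst M m : ℚ))

theorem sum_stirlingFirstCoeff_mul_stirlingSecondCoeff {n N : ℕ} (hn : n ≤ N) (m : ℕ) :
    ∑ k ∈ Iic N, stirlingFirstCoeff m k * stirlingSecondCoeff k n = if m = n then 1 else 0 := by
  have hterm (k : ℕ) : stirlingFirstCoeff m k * stirlingSecondCoeff k n =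
      (-1) ^ m * m.factorial / n.factorial *
        ((-1) ^ k * Nat.stirlingFirst k m * Nat.stirlingSecond n k) := by
    rw [stirlingFirstCoeff, stirlingSecondCoeff, zpow_natCast_sub_natCast₀ (by norm_num),
      stirlingFirst_eq_nat_stirlingFirst, stirlingSecond_eq_nat_stirlingSecond]
    field_simp
    rw [← pow_mul, pow_mul', neg_one_sq, one_pow, one_mul]
  have horth := congrArg (Int.cast : ℤ → ℚ)
    (Nat.sum_neg_one_pow_mul_stirlingFirst_mul_stirlingSecond (Nat.lt_succ_of_le hn) m)
  push_cast at horth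
  rw [← Nat.range_succ_eq_Iic, sum_congr rfl fun k _ => hterm k, ← mul_sum, horth]
  obtain rfl | h := eq_or_ne m n
  · rw [if_pos rfl, if_pos rfl, mul_div_assoc, div_self (by positivity), mul_one, ← mul_pow,
      neg_one_mul, neg_neg, one_pow]
  · rw [if_neg h.symm, if_neg h, mul_zero]

theorem stirlingSecondCoeff_eq_zero_of_lt {m M : ℕ} (h : M < m) :
    stirlingSecondCoeff m M = 0 := by
  simp [stirlingSecondCoeff, stirlingSecond_eq_nat_stirlingSecond,
    Nat.stirlingSecond_eq_zero_of_lt h]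

theorem le_of_prod_stirlingSecondCoeff_ne_zero {α : Type*} [Fintype α] {m M : α → ℕ}
    (h : ∏ c, stirlingSecondCoeff (m c) (M c) ≠ 0) : m ≤ M := fun c =>
  not_lt.1 (mt stirlingSecondCoeff_eq_zero_of_lt (prod_ne_zero_iff.1 h c (mem_univ c)))

theorem sum_prod_stirlingFirstCoeff_mul_prod_stirlingSecondCoeff {α : Type*} [Fintype α]
    [DecidableEq α] {b n : α → ℕ} (hn : n ≤ b) (m : α → ℕ) :
    ∑ M ∈ Iic b, (∏ c, stirlingFirstCoeff (m c) (M c)) * ∏ c, stirlingSecondCoeff (M c) (n c) =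
      if m = n then 1 else 0 := by
  simp_rw [← prod_mul_distrib]
  rw [show Iic b = Fintype.piFinset fun c => Iic (b c) from rfl,
    ← prod_univ_sum (fun c => Iic (b c))
      (fun c k => stirlingFirstCoeff (m c) k * stirlingSecondCoeff k (n c))]
  simp_rw [sum_stirlingFirstCoeff_mul_stirlingSecondCoeff (hn _), prod_boole, funext_iff]
  simp

theorem neg_one_zpow_mul_prod_eq_prod_stirlingFirstCoeff {α : Type*} [Fintype α]
    (m M : α → ℕ) :
    (-1 : ℚ) ^ ((∑ c, (M c : ℤ)) - ∑ c, (m c : ℤ)) *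
      ∏ c, ((m c).factorial : ℚ) / ((M c).factorial : ℚ) * (stirlingFirst (M c) (m c) : ℚ) =
      ∏ c, stirlingFirstCoeff (m c) (M c) := by
  simp only [stirlingFirstCoeff, prod_mul_distrib, ← sum_sub_distrib,
    zpow_sum₀ (by norm_num : (-1 : ℚ) ≠ 0)]

/-- multivariate Stirling inversion (core of Theorem 4.3 of the
paper). If `B` has finite support and
`F m = ∑_M [∏_c (m_c)!/(M_c)! · S(M_c, m_c)] • B M`, then `F` has finite support
and `B m = ∑_M (-1)^{|M|-|m|} [∏_c (m_c)!/(M_c)! · c(M_c, m_c)] • F M`. -/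
theorem stmt_16 {α V : Type*} [Fintype α] [AddCommGroup V] [Module ℚ V]
    (B F : (α → ℕ) → V) (hB : (Function.support B).Finite)
    (hF : ∀ m : α → ℕ, F m =
      ∑ᶠ M : α → ℕ,
        (∏ c : α, ((m c).factorial : ℚ) / ((M c).factorial : ℚ) *
          (stirlingSecond (M c) (m c) : ℚ)) • B M) :
    (Function.support F).Finite ∧
      ∀ m : α → ℕ, B m =
        ∑ᶠ M : α → ℕ,
          ((-1 : ℚ) ^ ((∑ c : α, (M c : ℤ)) - ∑ c : α, (m c : ℤ)) *
            ∏ c : α, ((m c).factorial : ℚ) / ((M c).factorial : ℚ) *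
              (stirlingFirst (M c) (m c) : ℚ)) • F M := by
  classical
  obtain ⟨b, hb⟩ := hB.bddAbove
  have hBb : Function.support B ⊆ Iic b := fun M hM => mem_Iic.2 (hb hM)
  have hFb (m : α → ℕ) : F m = ∑ M ∈ Iic b, (∏ c, stirlingSecondCoeff (m c) (M c)) • B M :=
    (hF m).trans (finsum_smul_eq_sum_of_support_subset _ hBb)
  have hFsupp : Function.support F ⊆ Iic b := fun m hm => by
    rw [Function.mem_support, hFb] at hm
    obtain ⟨M, hM, hne⟩ := exists_ne_zero_of_sum_ne_zero hm
    exact mem_Iic.2 ((le_of_prod_stirlingSecondCoeff_ne_zero (left_ne_zero_of_smul hne)).trans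
      (mem_Iic.1 hM))
  refine ⟨(Iic b).finite_toSet.subset hFsupp, fun m => ?_⟩
  simp_rw [neg_one_zpow_mul_prod_eq_prod_stirlingFirstCoeff,
    finsum_smul_eq_sum_of_support_subset _ hFsupp, hFb]
  exact (sum_smul_sum_smul_eq_self (fun m n hn =>
    sum_prod_stirlingFirstCoeff_mul_prod_stirlingSecondCoeff (mem_Iic.1 hn) m) hBb m).symm
end

section
/- Let R be a commutative ℚ-algebra, α a type, s a finite subset of α, w, x : α → R, and n, k ∈ ℕ with k ≤ n. Then (Σ_{c ∈ s} w_c)^{n−k} · (Σ_{c ∈ s} w_c · x_c)^k = (n−k)! · k! · Σ_m (Π_{c ∈ s} w_c^{m_c} / m_c!) · [ Σ_q Π_{c ∈ s} C(m_c, q_c) · x_c^{q_c} ], where the outer sum ranges over all m : α → ℕ vanishing outside s with Σ_{c∈s} m_c = n, the inner sum ranges over all q : α → ℕ with q_c ≤ m_c for every c and Σ_{c∈s} q_c = k, and C(m_c, q_c) is the binomial coefficient. -/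
open Finset

-- key nat identity
lemma nat_key {α : Type*} (s : Finset α) (a b : α → ℕ) (n k : ℕ)
    (ha : ∑ c ∈ s, a c = n - k) (hb : ∑ c ∈ s, b c = k) :
    Nat.multinomial s a * Nat.multinomial s b * ∏ c ∈ s, ((a + b) c).factorial =
      (n - k).factorial * k.factorial * ∏ c ∈ s, ((a + b) c).choose (b c) := by
  have h1 : ∀ c ∈ s, ((a + b) c).factorial
      = ((a + b) c).choose (b c) * ((a c).factorial * (b c).factorial) := by
    intro c _
    simp only [Pi.add_apply]
    rw [← Nat.add_choose_mul_factorial_mul_factorial (a c) (b c), mul_assoc]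
  rw [Finset.prod_congr rfl h1, Finset.prod_mul_distrib, Finset.prod_mul_distrib]
  have h2 := Nat.multinomial_spec s a
  have h3 := Nat.multinomial_spec s b
  rw [ha] at h2; rw [hb] at h3
  calc Nat.multinomial s a * Nat.multinomial s b *
        ((∏ c ∈ s, ((a + b) c).choose (b c)) * ((∏ c ∈ s, (a c).factorial) * ∏ c ∈ s, (b c).factorial))
      = ((∏ c ∈ s, (a c).factorial) * Nat.multinomial s a) *
        ((∏ c ∈ s, (b c).factorial) * Nat.multinomial s b) *
        ∏ c ∈ s, ((a + b) c).choose (b c) := by ring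
    _ = _ := by rw [h2, h3]



open scoped Classical in
/-- identity of Example 4.14 ('power_n_basis_symmetric').
`(∑ w_c)^{n-k} (∑ w_c x_c)^k = (n-k)!·k!· ∑_m (∏ w_c^{m_c}/m_c!) · [∑_q ∏ C(m_c,q_c) x_c^{q_c}]`,
where `m` ranges over multiplicity vectors vanishing outside `s` with total sum `n`,
and `q` over vectors with `q ≤ m` and total sum `k`. -/
theorem stmt_17 {R α : Type*} [CommRing R] [Algebra ℚ R] [DecidableEq α]
    (s : Finset α) (w x : α → R) (n k : ℕ) (hk : k ≤ n) :
    (∑ c ∈ s, w c) ^ (n - k) * (∑ c ∈ s, w c * x c) ^ k =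
      ((n - k).factorial * k.factorial) •
        ∑ m ∈ Finset.piAntidiag s n,
          (∏ c ∈ s, ((m c).factorial : ℚ))⁻¹ •
            ((∏ c ∈ s, w c ^ m c) *
              ∑ q ∈ (Finset.piAntidiag s k).filter (fun q => ∀ c, q c ≤ m c),
                ∏ c ∈ s, ((m c).choose (q c) : R) * x c ^ q c) := by
  rw [Finset.sum_pow_eq_sum_piAntidiag, Finset.sum_pow_eq_sum_piAntidiag, Finset.sum_mul_sum]
  simp only [Finset.mul_sum, Finset.smul_sum]
  rw [Finset.sum_sigma', Finset.sum_sigma']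
  refine Finset.sum_nbij' (fun p => ⟨p.1 + p.2, p.2⟩) (fun p => ⟨p.1 - p.2, p.2⟩) ?_ ?_ ?_ ?_ ?_
  · rintro ⟨a, b⟩ hp
    simp only [Finset.mem_sigma, mem_piAntidiag, Finset.mem_filter] at hp ⊢
    obtain ⟨⟨ha1, ha2⟩, hb1, hb2⟩ := hp
    refine ⟨⟨?_, ?_⟩, ⟨⟨hb1, hb2⟩, ?_⟩⟩
    · simp only [Pi.add_apply, Finset.sum_add_distrib, ha1, hb1, Nat.sub_add_cancel hk]
    · intro i hi
      simp only [Pi.add_apply] at hi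
      rcases eq_or_ne (a i) 0 with h | h
      · exact hb2 i (by omega)
      · exact ha2 i h
    · intro c; simp
  · rintro ⟨m, q⟩ hp
    simp only [Finset.mem_sigma, mem_piAntidiag, Finset.mem_filter] at hp ⊢
    obtain ⟨⟨hm1, hm2⟩, ⟨⟨hq1, hq2⟩, hq3⟩⟩ := hp
    refine ⟨⟨?_, ?_⟩, hq1, hq2⟩
    · have : ∑ c ∈ s, (m c - q c) = ∑ c ∈ s, m c - ∑ c ∈ s, q c := by
        rw [Finset.sum_tsub_distrib]
        intro c _; exact hq3 c
      simp only [Pi.sub_apply, this, hm1, hq1]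
    · intro i hi
      simp only [Pi.sub_apply] at hi
      exact hm2 i (by omega)
  · rintro ⟨a, b⟩ hp
    simp only [Finset.mem_sigma, mem_piAntidiag, Finset.mem_filter] at hp
    have h : a + b - b = a := by ext c; simp
    simp only [h]
  · rintro ⟨m, q⟩ hp
    simp only [Finset.mem_sigma, mem_piAntidiag, Finset.mem_filter] at hp
    have := hp.2.2
    have h : m - q + q = m := by ext c; simp [Nat.sub_add_cancel (this c)]
    simp only [h]
  · rintro ⟨a, b⟩ hp
    simp only [Finset.mem_sigma, mem_piAntidiag, Finset.mem_filter] at hp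
    obtain ⟨⟨ha1, ha2⟩, ⟨hb1, hb2⟩⟩ := hp
    have hkey := nat_key s a b n k ha1 hb1
    have hfq : (∏ c ∈ s, (((a + b) c).factorial : ℚ)) ≠ 0 :=
      Finset.prod_ne_zero_iff.2 fun c _ => Nat.cast_ne_zero.2 (Nat.factorial_ne_zero _)
    have key : ((Nat.multinomial s a : ℚ)) * (Nat.multinomial s b : ℚ) =
        ((((n - k).factorial * k.factorial : ℕ)) : ℚ) *
            (∏ c ∈ s, (((a + b) c).choose (b c) : ℚ)) *
          (∏ c ∈ s, (((a + b) c).factorial : ℚ))⁻¹ := by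
      rw [eq_mul_inv_iff_mul_eq₀ hfq]
      push_cast
      exact_mod_cast hkey
    have hsmul : ∀ (q : ℚ) (r : R), q • r = algebraMap ℚ R q * r := fun q r => Algebra.smul_def q r
    calc (↑(Nat.multinomial s a) * ∏ c ∈ s, w c ^ a c) *
          (↑(Nat.multinomial s b) * ∏ c ∈ s, (w c * x c) ^ b c)
        = ((Nat.multinomial s a : ℚ) * (Nat.multinomial s b : ℚ)) •
            ((∏ c ∈ s, w c ^ a c) * ((∏ c ∈ s, w c ^ b c) * ∏ c ∈ s, x c ^ b c)) := by
          rw [hsmul, map_mul, map_natCast, map_natCast]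
          simp only [mul_pow, Finset.prod_mul_distrib]
          ring
      _ = _ := by
          have hPT : (∏ c ∈ s, w c ^ (a + b) c) *
              (∏ c ∈ s, ((((a + b) c).choose (b c)) : R) * x c ^ b c)
            = (∏ c ∈ s, (((a + b) c).choose (b c) : ℚ)) •
              ((∏ c ∈ s, w c ^ a c) * ((∏ c ∈ s, w c ^ b c) * ∏ c ∈ s, x c ^ b c)) := by
            rw [hsmul, map_prod]
            simp only [map_natCast, Pi.add_apply, pow_add, Finset.prod_mul_distrib]
            ring
          rw [key, hPT, ← Nat.cast_smul_eq_nsmul ℚ, smul_smul, smul_smul]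
          congr 1
          show _ = _ * (∏ c ∈ s, (((a + b) c).factorial : ℚ))⁻¹ * _
          ring
end

section
/- Let R be a commutative ring, α a type, s a finite subset of α, m : α → ℕ, x : α → R, and k ∈ ℕ. Let μ be the multiset over R obtained by taking, for each c ∈ s, the element x_c with multiplicity m_c (i.e., μ = Σ_{c ∈ s} replicate (m_c) (x_c)). Then the k-th elementary symmetric function of μ, e_k(μ) := Σ over all sub-multisets of μ of cardinality k of the product of their elements, satisfies e_k(μ) = Σ_q Π_{c ∈ s} C(m_c, q_c) · x_c^{q_c}, where the sum ranges over all q : α → ℕ with q_c ≤ m_c for every c ∈ s, q vanishing outside s, and Σ_{c ∈ s} q_c = k, and C(m_c, q_c) is the binomial coefficient. -/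
/-! The identity `e_k(μ + ν) = ∑_{i + j = k} e_i(μ) e_j(ν)` turns `e_k` of a finite sum of
multisets into a sum over `piAntidiag` of products of the `e_{q c}` of the summands, and
`e_j(replicate n a) = C(n, j) a^j`. The filter `q ≤ m` only discards terms in which some
binomial coefficient vanishes. -/

open Finset

namespace Multiset

variable {R : Type*} [CommSemiring R]

@[simp] lemma esymm_zero (μ : Multiset R) : μ.esymm 0 = 1 := by
  simp [esymm]

lemma zero_esymm (k : ℕ) : (0 : Multiset R).esymm k = if k = 0 then 1 else 0 := by
  cases k <;> simp [esymm, powersetCard_zero_right]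

lemma esymm_cons_succ (a : R) (μ : Multiset R) (k : ℕ) :
    (a ::ₘ μ).esymm (k + 1) = μ.esymm (k + 1) + a * μ.esymm k := by
  simp only [esymm, powersetCard_cons, map_add, sum_add, map_map, Function.comp_def, prod_cons,
    sum_map_mul_left]

lemma esymm_replicate (n : ℕ) (a : R) (k : ℕ) :
    (replicate n a).esymm k = n.choose k * a ^ k := by
  induction n generalizing k with
  | zero => cases k <;> simp [zero_esymm]
  | succ n ih =>
    cases k with
    | zero => simp
    | succ k =>
      rw [replicate_succ, esymm_cons_succ, ih, ih, Nat.choose_succ_succ', Nat.cast_add]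
      ring

lemma esymm_add (μ ν : Multiset R) (k : ℕ) :
    (μ + ν).esymm k =
      ∑ p ∈ Finset.HasAntidiagonal.antidiagonal k, μ.esymm p.1 * ν.esymm p.2 := by
  induction μ using Multiset.induction generalizing k with
  | empty => cases k <;> simp [zero_esymm, Nat.sum_antidiagonal_succ]
  | cons a μ ih =>
    cases k with
    | zero => simp
    | succ k =>
      rw [cons_add, esymm_cons_succ, ih, ih, Nat.sum_antidiagonal_succ, Nat.sum_antidiagonal_succ]
      simp only [esymm_zero, esymm_cons_succ, add_mul, sum_add_distrib, mul_sum, mul_assoc]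
      ring

lemma esymm_sum {ι : Type*} [DecidableEq ι] (s : Finset ι) (μ : ι → Multiset R) (k : ℕ) :
    (∑ c ∈ s, μ c).esymm k = ∑ q ∈ s.piAntidiag k, ∏ c ∈ s, (μ c).esymm (q c) := by
  induction s using Finset.cons_induction generalizing k with
  | empty => cases k <;> simp [zero_esymm]
  | cons i s hi ih =>
    rw [Finset.sum_cons, esymm_add, piAntidiag_cons hi, sum_disjiUnion]
    refine sum_congr rfl fun p _ => ?_
    rw [ih, mul_sum, sum_map]
    refine sum_congr rfl fun q hq => ?_
    have hqi : q i = 0 := not_imp_comm.1 ((mem_piAntidiag.1 hq).2 i) hi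
    simp only [addRightEmbedding_apply, Pi.add_apply]
    rw [Finset.prod_cons, if_pos rfl, hqi, zero_add]
    refine congrArg _ (prod_congr rfl fun c hc => ?_).symm
    rw [if_neg (ne_of_mem_of_not_mem hc hi), add_zero]

end Multiset

/-- expansion of elementary symmetric functions of a multiset with
multiplicities (used in Example 4.14 of the paper). For the multiset `μ` taking
each `x c` (`c ∈ s`) with multiplicity `m c`, the `k`-th elementary symmetric
function `e_k(μ) = ∑_{ν ⊆ μ, |ν| = k} ∏ ν` equals
`∑_{q ≤ m, support q ⊆ s, ∑ q = k} ∏_c C(m_c, q_c) x_c^{q_c}`. -/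
theorem stmt_18 {R α : Type*} [CommRing R] [DecidableEq α]
    (s : Finset α) (m : α → ℕ) (x : α → R) (k : ℕ) :
    Multiset.esymm (∑ c ∈ s, Multiset.replicate (m c) (x c)) k =
      ∑ q ∈ (Finset.piAntidiag s k).filter (fun q => ∀ c ∈ s, q c ≤ m c),
        ∏ c ∈ s, ((m c).choose (q c) : R) * x c ^ q c := by
  rw [sum_filter_of_ne, Multiset.esymm_sum]
  · simp only [Multiset.esymm_replicate]
  · intro q _ hq c hc
    by_contra! hlt
    exact hq (prod_eq_zero hc (by simp [Nat.choose_eq_zero_of_lt hlt]))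
end
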